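/- arXiv:2201.02173 — 3 statements merged into one kernel-verified Lean document; each statement's English description precedes it below -/
import Mathlib

section
/- Let G be a finite simple graph without isolated vertices and Z a monotone NBP representing ψ(G). Let x, y be vertices of Z with a path from x to y such that every x–y path of Z is read-once. Let b be a vertex lying on some x–y path, let C be a clause of ψ(x, y), and let C' = C ∩ V(x, b) where V(x, b) is the set of variables labelling edges on paths of Z from x to b. If ∅ ⊊ C' ⊊ C, then either every x–y path of Z passing through b has its label set intersecting C', or every x–y path of Z passing through b has its label set intersecting C \ C'. -/
/-- The variables of the CNF `ψ(G)`: vertex variables and edge variables. -/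
abbrev PsiVar (V : Type) := V ⊕ Sym2 V

/-- A total assignment to the variables of `ψ(G)`. -/
abbrev Assignment (V : Type) := PsiVar V → Bool

/-- `σ` satisfies the CNF `ψ(G)` whose clauses are `(u ∨ e ∨ v)`
for the edges `e = {u,v}` of `G`. -/
def psiSat {V : Type} (G : SimpleGraph V) (σ : Assignment V) : Prop :=
  ∀ ⦃u v : V⦄, G.Adj u v →
    σ (Sum.inl u) = true ∨ σ (Sum.inr s(u, v)) = true ∨ σ (Sum.inl v) = true

/-- A (nondeterministic) branching program: a directed multigraph on `Fin n`
with edge set `Fin m`, a source, a sink, and an optional literal labelling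
each edge. -/
structure BP (X : Type) where
  n : ℕ
  m : ℕ
  esrc : Fin m → Fin n
  edst : Fin m → Fin n
  source : Fin n
  sink : Fin n
  label : Fin m → Option (X × Bool)

namespace BP

variable {X : Type}

/-- `Z.IsPathFrom u v p`: the edge list `p` forms a directed path from `u` to `v`. -/
def IsPathFrom (Z : BP X) : Fin Z.n → Fin Z.n → List (Fin Z.m) → Prop
  | u, v, [] => u = v
  | u, v, e :: p => Z.esrc e = u ∧ Z.IsPathFrom (Z.edst e) v p

/-- `v` is reachable from `u`. -/
def Reach (Z : BP X) (u v : Fin Z.n) : Prop := ∃ p, Z.IsPathFrom u v p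

/-- `Z` is acyclic. -/
def Acyclic (Z : BP X) : Prop :=
  ∀ (u : Fin Z.n) (p : List (Fin Z.m)), Z.IsPathFrom u u p → p = []

/-- `Z` is a DAG with one source and one sink: no edge enters the source, no edge
leaves the sink, and every vertex lies on a source-sink path. -/
def IsNBP (Z : BP X) : Prop :=
  Z.Acyclic ∧ (∀ e, Z.edst e ≠ Z.source) ∧ (∀ e, Z.esrc e ≠ Z.sink) ∧
    ∀ v : Fin Z.n, Z.Reach Z.source v ∧ Z.Reach v Z.sink

/-- The number of edges of the path `p` labelled with a literal of variable `x`. -/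
def varCount [DecidableEq X] (Z : BP X) (p : List (Fin Z.m)) (x : X) : ℕ :=
  p.countP fun e => (Z.label e).elim false fun l => decide (l.1 = x)

/-- A path is read-once if no variable labels two of its edges. -/
def ReadOnce [DecidableEq X] (Z : BP X) (p : List (Fin Z.m)) : Prop :=
  ∀ x : X, Z.varCount p x ≤ 1

/-- `Z` is a syntactic read-`d`-times BP. -/
def ReadTimes [DecidableEq X] (Z : BP X) (d : ℕ) : Prop :=
  ∀ (u v : Fin Z.n) (p : List (Fin Z.m)), Z.IsPathFrom u v p → ∀ x : X, Z.varCount p x ≤ d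

/-- `Z` is monotone: no negative literal labels an edge. -/
def MonotoneBP (Z : BP X) : Prop :=
  ∀ (e : Fin Z.m) (l : X × Bool), Z.label e = some l → l.2 = true

/-- `Z` is separable with parameter `d`: every source-sink path is the
concatenation of at most `d` read-once subpaths. -/
def Separable [DecidableEq X] (Z : BP X) (d : ℕ) : Prop :=
  ∀ p, Z.IsPathFrom Z.source Z.sink p →
    ∃ ps : List (List (Fin Z.m)), ps.length ≤ d ∧ ps.flatten = p ∧ ∀ q ∈ ps, Z.ReadOnce q

/-- `Z` is a monotone separable syntactic read-`d`-times NBP. -/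
def IsSMNBP [DecidableEq X] (Z : BP X) (d : ℕ) : Prop :=
  Z.IsNBP ∧ Z.MonotoneBP ∧ Z.ReadTimes d ∧ Z.Separable d

/-- The path `p` agrees with the total assignment `σ` (so `p` is consistent
and its set of literals is contained in `σ`). -/
def PathAgrees (Z : BP X) (p : List (Fin Z.m)) (σ : X → Bool) : Prop :=
  ∀ e ∈ p, ∀ l : X × Bool, Z.label e = some l → σ l.1 = l.2

/-- `σ` is a satisfying assignment of `Z`: some consistent source-sink path
carries it. -/
def Sat (Z : BP X) (σ : X → Bool) : Prop :=
  ∃ p, Z.IsPathFrom Z.source Z.sink p ∧ Z.PathAgrees p σ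

end BP

/-- `Z` represents the CNF `ψ(G)`. -/
def RepresentsPsi {V : Type} (G : SimpleGraph V) (Z : BP (PsiVar V)) : Prop :=
  ∀ σ : Assignment V, Z.Sat σ ↔ psiSat G σ

/-- The set of variables of the clause of `ψ(G)` corresponding to the edge `e`
(all its literals are positive). -/
def clauseVars {V : Type} (e : Sym2 V) : Set (PsiVar V) :=
  {w | (∃ u ∈ e, w = Sum.inl u) ∨ w = Sum.inr e}

/-- `V(x,b)`: the set of variables occurring as labels on paths of `Z`
from `x` to `b`. -/
def BP.VarsBetween {X : Type} (Z : BP X) (x b : Fin Z.n) : Set X :=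
  {w | ∃ p, Z.IsPathFrom x b p ∧ ∃ e ∈ p, ∃ bb : Bool, Z.label e = some (w, bb)}

lemma BP.IsPathFrom.append' {X : Type} {Z : BP X} {a b c : Fin Z.n}
    {p q : List (Fin Z.m)} (h1 : Z.IsPathFrom a b p) (h2 : Z.IsPathFrom b c q) :
    Z.IsPathFrom a c (p ++ q) := by
  induction p generalizing a with
  | nil =>
    simp only [BP.IsPathFrom] at h1
    subst h1; simpa using h2
  | cons e p ih =>
    obtain ⟨h, h'⟩ := h1
    exact ⟨h, ih h'⟩

/-- Let every `x–y` path of `Z` be read-once, let `b` lie on some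
`x–y` path, let `C` be the clause of `ψ(x,y)` of an edge `{u0, v0}` of `G` and
`C' = C ∩ V(x,b)` with `∅ ⊊ C' ⊊ C`.  Then either every `x–y` path through `b`
carries a (positive) literal of `C'`, or every `x–y` path through `b` carries a
literal of `C \ C'`. -/
theorem clause_split_at_midpoint {V : Type} [Fintype V] [DecidableEq V]
    (G : SimpleGraph V) (hno : ∀ v : V, ∃ u, G.Adj v u)
    (Z : BP (PsiVar V)) (hZ : Z.IsNBP) (hmono : Z.MonotoneBP)
    (hrep : RepresentsPsi G Z)
    (x y b : Fin Z.n) (hxy : Z.Reach x y)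
    (hro : ∀ p, Z.IsPathFrom x y p → Z.ReadOnce p)
    (hxb : Z.Reach x b) (hby : Z.Reach b y)
    (u0 v0 : V) (huv : G.Adj u0 v0)
    (hC : ∀ p, Z.IsPathFrom x y p → ∃ e ∈ p, ∃ w : PsiVar V,
      Z.label e = some (w, true) ∧ w ∈ clauseVars (s(u0, v0)))
    (hne : (clauseVars (s(u0, v0)) ∩ Z.VarsBetween x b).Nonempty)
    (hproper : ¬clauseVars (s(u0, v0)) ⊆ Z.VarsBetween x b) :
    (∀ p1 p2, Z.IsPathFrom x b p1 → Z.IsPathFrom b y p2 →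
      ∃ e ∈ p1 ++ p2, ∃ w : PsiVar V, Z.label e = some (w, true) ∧
        w ∈ clauseVars (s(u0, v0)) ∩ Z.VarsBetween x b) ∨
    (∀ p1 p2, Z.IsPathFrom x b p1 → Z.IsPathFrom b y p2 →
      ∃ e ∈ p1 ++ p2, ∃ w : PsiVar V, Z.label e = some (w, true) ∧
        w ∈ clauseVars (s(u0, v0)) \ Z.VarsBetween x b) := by
  by_contra hcon
  push_neg at hcon
  obtain ⟨⟨p1, p2, hp1, hp2, hA⟩, ⟨q1, q2, hq1, hq2, hB⟩⟩ := hcon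
  obtain ⟨e, he, w, hlab, hwC⟩ := hC _ (hp1.append' hq2)
  rcases List.mem_append.mp he with h | h
  · -- e ∈ p1, so w ∈ V(x,b), hence w ∈ C ∩ V(x,b), contradicting hA
    have hwV : w ∈ Z.VarsBetween x b := ⟨p1, hp1, e, h, true, hlab⟩
    exact hA e (List.mem_append.mpr (Or.inl h)) w hlab ⟨hwC, hwV⟩
  · -- e ∈ q2
    by_cases hwV : w ∈ Z.VarsBetween x b
    · obtain ⟨r, hr, e', he', bb, hlab'⟩ := hwV
      have hrq : Z.IsPathFrom x y (r ++ q2) := hr.append' hq2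
      have hcount := hro _ hrq w
      have h1 : 0 < List.countP
          (fun e => (Z.label e).elim false fun l => decide (l.1 = w)) r :=
        List.countP_pos_iff.mpr ⟨e', he', by simp [hlab']⟩
      have h2 : 0 < List.countP
          (fun e => (Z.label e).elim false fun l => decide (l.1 = w)) q2 :=
        List.countP_pos_iff.mpr ⟨e, h, by simp [hlab]⟩
      simp only [BP.varCount, List.countP_append] at hcount
      omega
    · exact hB e (List.mem_append.mpr (Or.inr h)) w hlab ⟨hwC, hwV⟩
end

section
/- Let G be a finite simple graph without isolated vertices and Z a monotone NBP representing ψ(G). Let x, y be vertices of Z with a path from x to y such that every x–y path of Z is read-once, and let r = pw(G(x, y)). Then every x–y path P of Z has a vertex a such that the set 𝐒((x, a, y)) of total satisfying assignments of ψ(G) carried by source-sink paths of Z passing through x, a and y fixes a matching of clauses of ψ(G) of size at least ⌊r/4⌋. -/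
/-- A path decomposition of a simple graph `G`: a sequence of bags covering all
vertices and edges such that the bags containing any fixed vertex form an interval. -/
structure PathDecomp {V : Type} (G : SimpleGraph V) where
  len : ℕ
  bag : Fin len → Finset V
  cover_vertex : ∀ v : V, ∃ i, v ∈ bag i
  cover_edge : ∀ ⦃u v : V⦄, G.Adj u v → ∃ i, u ∈ bag i ∧ v ∈ bag i
  interval : ∀ (v : V) (i j k : Fin len), i ≤ j → j ≤ k → v ∈ bag i → v ∈ bag k → v ∈ bag j

/-- The pathwidth of a simple graph: minimum over path decompositions of
(maximum bag size minus one). -/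
noncomputable def pathwidth {V : Type} (G : SimpleGraph V) : ℕ :=
  sInf {k | ∃ D : PathDecomp G, ∀ i, (D.bag i).card ≤ k + 1}

/-- The `d`-pathwidth of `G`: the smallest `k` such that `G` is the union of `d`
subgraphs each of pathwidth at most `k`. -/
noncomputable def dPathwidth {V : Type} (d : ℕ) (G : SimpleGraph V) : ℕ :=
  sInf {k | ∃ f : Fin d → SimpleGraph V,
    (∀ i, f i ≤ G) ∧ (⨆ i, f i) = G ∧ ∀ i, pathwidth (f i) ≤ k}

/-- The clique-preserving `d`-pathwidth of `G`: as `dPathwidth`, with the extra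
requirement that every clique of `G` is a subgraph of some member of the union. -/
noncomputable def cliquePreservingDPathwidth {V : Type} (d : ℕ) (G : SimpleGraph V) : ℕ :=
  sInf {k | ∃ f : Fin d → SimpleGraph V,
    (∀ i, f i ≤ G) ∧ (⨆ i, f i) = G ∧ (∀ i, pathwidth (f i) ≤ k) ∧
    ∀ s : Set V, G.IsClique s → ∃ i, (f i).IsClique s}

/-- `G(x,y)`: the subgraph of `G` induced by the edges whose clauses belong to
`ψ(x,y)`, i.e. the clauses of `ψ(G)` satisfied by the labels of every `x–y`
path of `Z`. -/
def clauseGraph {V : Type} (G : SimpleGraph V) (Z : BP (PsiVar V))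
    (x y : Fin Z.n) : SimpleGraph V where
  Adj u v := G.Adj u v ∧ ∀ p, Z.IsPathFrom x y p →
    ∃ e ∈ p, ∃ w : PsiVar V, Z.label e = some (w, true) ∧
      (w = Sum.inl u ∨ w = Sum.inl v ∨ w = Sum.inr s(u, v))
  symm := by
    constructor
    rintro u v ⟨h1, h2⟩
    refine ⟨h1.symm, fun p hp => ?_⟩
    obtain ⟨e, he, w, hw, hor⟩ := h2 p hp
    refine ⟨e, he, w, hw, ?_⟩
    rw [Sym2.eq_swap]
    tauto
  loopless := ⟨fun u h => G.irrefl h.1⟩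

/-- `u` occurs on the path `p` from `s` to `t`. -/
def BP.OnPath {X : Type} (Z : BP X) (u s t : Fin Z.n) (p : List (Fin Z.m)) : Prop :=
  ∃ p1 p2, p = p1 ++ p2 ∧ Z.IsPathFrom s u p1 ∧ Z.IsPathFrom u t p2

/-- `𝐒((x,a,y))`: the set of total satisfying assignments of `ψ(G)` carried by
source-sink paths of `Z` passing through `x`, `a` and `y` (in this order). -/
def carriedThrough {V : Type} (G : SimpleGraph V) (Z : BP (PsiVar V))
    (x a y : Fin Z.n) : Set (Assignment V) :=
  {σ | psiSat G σ ∧ ∃ p1 p2 p3 p4,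
    Z.IsPathFrom Z.source x p1 ∧ Z.IsPathFrom x a p2 ∧ Z.IsPathFrom a y p3 ∧
    Z.IsPathFrom y Z.sink p4 ∧ Z.PathAgrees (p1 ++ p2 ++ p3 ++ p4) σ}

/-! ### Auxiliary infrastructure for the main theorem -/

noncomputable section MidpointAux

open Classical

namespace BP

variable {X : Type}

theorem isPathFrom_nil {Z : BP X} {u v : Fin Z.n} (h : Z.IsPathFrom u v []) : u = v := h

theorem isPathFrom_append {Z : BP X} {u v w : Fin Z.n} {p q : List (Fin Z.m)}
    (hp : Z.IsPathFrom u v p) (hq : Z.IsPathFrom v w q) :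
    Z.IsPathFrom u w (p ++ q) := by
  induction p generalizing u with
  | nil => rw [List.nil_append]; exact (isPathFrom_nil hp) ▸ hq
  | cons e p ih => exact ⟨hp.1, ih hp.2⟩

/-- End vertex of a path starting at `u`. -/
def pathEnd (Z : BP X) : Fin Z.n → List (Fin Z.m) → Fin Z.n
  | u, [] => u
  | _, e :: p => Z.pathEnd (Z.edst e) p

theorem pathEnd_eq {Z : BP X} {u v : Fin Z.n} {p : List (Fin Z.m)}
    (h : Z.IsPathFrom u v p) : Z.pathEnd u p = v := by
  induction p generalizing u with
  | nil => exact isPathFrom_nil h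
  | cons e p ih => exact ih h.2

theorem isPathFrom_split {Z : BP X} {u w : Fin Z.n} {p q : List (Fin Z.m)}
    (h : Z.IsPathFrom u w (p ++ q)) :
    Z.IsPathFrom u (Z.pathEnd u p) p ∧ Z.IsPathFrom (Z.pathEnd u p) w q := by
  induction p generalizing u with
  | nil => exact ⟨rfl, h⟩
  | cons e p ih =>
    obtain ⟨h1, h2⟩ := h
    exact ⟨⟨h1, (ih h2).1⟩, (ih h2).2⟩

/-- `w` occurs as a (positive) label on the path `p`. -/
def Lbl (Z : BP X) (p : List (Fin Z.m)) (w : X) : Prop :=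
  ∃ e ∈ p, Z.label e = some (w, true)

theorem lbl_append {Z : BP X} {p q : List (Fin Z.m)} {w : X} :
    Z.Lbl (p ++ q) w ↔ Z.Lbl p w ∨ Z.Lbl q w := by
  constructor
  · rintro ⟨e, he, hl⟩
    rcases List.mem_append.mp he with h | h
    · exact Or.inl ⟨e, h, hl⟩
    · exact Or.inr ⟨e, h, hl⟩
  · rintro (⟨e, he, hl⟩ | ⟨e, he, hl⟩)
    · exact ⟨e, List.mem_append.mpr (Or.inl he), hl⟩
    · exact ⟨e, List.mem_append.mpr (Or.inr he), hl⟩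

theorem one_le_varCount_of_lbl [DecidableEq X] {Z : BP X} {p : List (Fin Z.m)} {w : X}
    (h : Z.Lbl p w) : 1 ≤ Z.varCount p w := by
  obtain ⟨e, he, hlab⟩ := h
  refine Nat.one_le_iff_ne_zero.mpr (fun h0 => ?_)
  have : 0 < Z.varCount p w := by
    unfold varCount
    refine List.countP_pos_iff.mpr ⟨e, he, ?_⟩
    rw [hlab]
    simp
  omega

/-- Two occurrences of the same variable on a read-once path are impossible. -/
theorem not_lbl_both [DecidableEq X] {Z : BP X} {p q : List (Fin Z.m)}
    (hro : Z.ReadOnce (p ++ q)) {w : X} (hp : Z.Lbl p w) (hq : Z.Lbl q w) : False := by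
  have h1 := one_le_varCount_of_lbl hp
  have h2 := one_le_varCount_of_lbl hq
  have := hro w
  unfold varCount at *
  rw [List.countP_append] at this
  omega

end BP

end MidpointAux
section StatusTheory

attribute [local instance] Classical.propDecidable

variable {V : Type} [Fintype V] [DecidableEq V]

/-- Vertex of `Z` reached after following the first `i` edges of `P` from `x`. -/
noncomputable def avtx {V : Type} (Z : BP (PsiVar V)) (x : Fin Z.n) (P : List (Fin Z.m))
    (i : ℕ) : Fin Z.n := Z.pathEnd x (P.take i)

/-- All `clauseVars C`-labels of `p` are equal to `z`. -/
def Cln {V : Type} (Z : BP (PsiVar V)) (C : Sym2 V) (z : PsiVar V)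
    (p : List (Fin Z.m)) : Prop :=
  ∀ w, Z.Lbl p w → w ∈ clauseVars C → w = z

/-- `p` carries no label from `clauseVars C`. -/
def ClnE {V : Type} (Z : BP (PsiVar V)) (C : Sym2 V) (p : List (Fin Z.m)) : Prop :=
  ∀ w, Z.Lbl p w → w ∉ clauseVars C

/-- "A-type" (right-sided) unfixedness witnesses at position `i` of `P`. -/
def AW {V : Type} (Z : BP (PsiVar V)) (x y : Fin Z.n) (P : List (Fin Z.m))
    (C : Sym2 V) (i : ℕ) : Prop :=
  ∀ z ∈ clauseVars C, ∃ q1 l r q4,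
    Z.IsPathFrom Z.source x q1 ∧ Z.IsPathFrom x (avtx Z x P i) l ∧
    Z.IsPathFrom (avtx Z x P i) y r ∧ Z.IsPathFrom y Z.sink q4 ∧
    Cln Z C z q1 ∧ ClnE Z C l ∧ Cln Z C z r ∧ Z.Lbl r z ∧ Cln Z C z q4

/-- "B-type" (left-sided) unfixedness witnesses at position `i` of `P`. -/
def BW {V : Type} (Z : BP (PsiVar V)) (x y : Fin Z.n) (P : List (Fin Z.m))
    (C : Sym2 V) (i : ℕ) : Prop :=
  ∀ z ∈ clauseVars C, ∃ q1 l r q4,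
    Z.IsPathFrom Z.source x q1 ∧ Z.IsPathFrom x (avtx Z x P i) l ∧
    Z.IsPathFrom (avtx Z x P i) y r ∧ Z.IsPathFrom y Z.sink q4 ∧
    Cln Z C z q1 ∧ Cln Z C z l ∧ Z.Lbl l z ∧ ClnE Z C r ∧ Cln Z C z q4

/-- The clause of `C` is fixed by `𝐒((x, a_i, y))`. -/
def Fx {V : Type} (G : SimpleGraph V) (Z : BP (PsiVar V)) (x y : Fin Z.n)
    (P : List (Fin Z.m)) (C : Sym2 V) (i : ℕ) : Prop :=
  ∃ T ⊂ clauseVars C, ∀ σ ∈ carriedThrough G Z x (avtx Z x P i) y, ∃ w ∈ T, σ w = true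

variable {G : SimpleGraph V} {Z : BP (PsiVar V)} {x y : Fin Z.n} {P : List (Fin Z.m)}

theorem mem_clauseVars_iff {u v : V} {w : PsiVar V} :
    w ∈ clauseVars s(u, v) ↔ w = Sum.inl u ∨ w = Sum.inl v ∨ w = Sum.inr s(u, v) := by
  simp only [clauseVars, Set.mem_setOf_eq, Sym2.mem_iff]
  constructor
  · rintro (⟨a, (rfl | rfl), rfl⟩ | rfl) <;> tauto
  · rintro (rfl | rfl | rfl)
    · exact Or.inl ⟨u, Or.inl rfl, rfl⟩
    · exact Or.inl ⟨v, Or.inr rfl, rfl⟩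
    · exact Or.inr rfl

theorem inr_mem_clauseVars (C : Sym2 V) : Sum.inr C ∈ clauseVars C := Or.inr rfl

theorem lbl_mono {p q : List (Fin Z.m)} (h : ∀ e ∈ p, e ∈ q) {w : PsiVar V} :
    Z.Lbl p w → Z.Lbl q w := fun ⟨e, he, hl⟩ => ⟨e, h e he, hl⟩

/-- Every `x`–`y` path of `Z` hits the clause of an edge of `G(x,y)`. -/
theorem hits_clause {u v : V} (hAdj : (clauseGraph G Z x y).Adj u v)
    {m : List (Fin Z.m)} (hm : Z.IsPathFrom x y m) :
    ∃ w ∈ clauseVars s(u, v), Z.Lbl m w := by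
  obtain ⟨e, he, w, hw, hor⟩ := hAdj.2 m hm
  exact ⟨w, mem_clauseVars_iff.mpr (by tauto), e, he, hw⟩

theorem avtx_take (hP : Z.IsPathFrom x y P) (i : ℕ) :
    Z.IsPathFrom x (avtx Z x P i) (P.take i) :=
  (Z.isPathFrom_split (by rw [List.take_append_drop]; exact hP)).1

theorem avtx_drop (hP : Z.IsPathFrom x y P) (i : ℕ) :
    Z.IsPathFrom (avtx Z x P i) y (P.drop i) :=
  (Z.isPathFrom_split (by rw [List.take_append_drop]; exact hP)).2

theorem avtx_zero : avtx Z x P 0 = x := rfl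

theorem avtx_length (hP : Z.IsPathFrom x y P) : avtx Z x P P.length = y := by
  unfold avtx
  rw [List.take_length]
  exact Z.pathEnd_eq hP

theorem take_decomp {i j : ℕ} (hij : i ≤ j) :
    P.take j = P.take i ++ (P.drop i).take (j - i) := by
  obtain ⟨d, rfl⟩ := Nat.exists_eq_add_of_le hij
  rw [Nat.add_sub_cancel_left, List.take_add]

theorem drop_decomp {i j : ℕ} (hij : i ≤ j) :
    P.drop i = (P.drop i).take (j - i) ++ P.drop j := by
  conv_lhs => rw [← List.take_append_drop (j - i) (P.drop i)]
  rw [List.drop_drop]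
  have h : i + (j - i) = j := by omega
  rw [h]

theorem avtx_seg (hP : Z.IsPathFrom x y P) {i j : ℕ} (hij : i ≤ j) :
    Z.IsPathFrom (avtx Z x P i) (avtx Z x P j) ((P.drop i).take (j - i)) := by
  have h := avtx_take hP j
  rw [take_decomp hij] at h
  exact (Z.isPathFrom_split h).2


theorem sigma_true_of_lbl {σ : Assignment V} {p q : List (Fin Z.m)}
    (hag : Z.PathAgrees q σ) (hsub : ∀ e ∈ p, e ∈ q) {w : PsiVar V}
    (h : Z.Lbl p w) : σ w = true := by
  obtain ⟨e, he, hl⟩ := h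
  exact hag e (hsub e he) (w, true) hl

/-- Main case split: an unfixed clause has one-sided singleton witnesses. -/
theorem notFx_cases (hro : ∀ p, Z.IsPathFrom x y p → Z.ReadOnce p)
    {u v : V} (hAdj : (clauseGraph G Z x y).Adj u v) {i : ℕ}
    (hnf : ¬ Fx G Z x y P s(u, v) i) :
    AW Z x y P s(u, v) i ∨ BW Z x y P s(u, v) i := by
  set C := s(u, v) with hCdef
  set a := avtx Z x P i with ha
  have key : ∀ z ∈ clauseVars C, ∃ q1 l r q4,
      Z.IsPathFrom Z.source x q1 ∧ Z.IsPathFrom x a l ∧ Z.IsPathFrom a y r ∧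
      Z.IsPathFrom y Z.sink q4 ∧ Cln Z C z q1 ∧ Cln Z C z l ∧ Cln Z C z r ∧ Cln Z C z q4 ∧
      (Z.Lbl l z ∨ Z.Lbl r z) := by
    intro z hz
    have hT : clauseVars C \ {z} ⊂ clauseVars C :=
      ⟨Set.diff_subset, fun hsub => (hsub hz).2 rfl⟩
    have hex : ∃ σ ∈ carriedThrough G Z x a y, ∀ w ∈ clauseVars C \ {z}, ¬ σ w = true := by
      by_contra hcon
      push_neg at hcon
      exact hnf ⟨_, hT, hcon⟩
    obtain ⟨σ, hσ, hfalse⟩ := hex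
    obtain ⟨hsat, p1, p2, p3, p4, h1, h2, h3, h4, hag⟩ := hσ
    have hcln : ∀ (p : List (Fin Z.m)), (∀ e ∈ p, e ∈ p1 ++ p2 ++ p3 ++ p4) → Cln Z C z p := by
      intro p hsub w hw hwcv
      by_contra hne
      exact hfalse w ⟨hwcv, hne⟩ (sigma_true_of_lbl hag hsub hw)
    have hm : Z.IsPathFrom x y (p2 ++ p3) := Z.isPathFrom_append h2 h3
    obtain ⟨w0, hw0cv, hw0⟩ := hits_clause hAdj hm
    have hw0z : w0 = z := by
      rcases BP.lbl_append.mp hw0 with h | h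
      · exact hcln p2 (by intro e he; simp [List.mem_append, he]) w0 h hw0cv
      · exact hcln p3 (by intro e he; simp [List.mem_append, he]) w0 h hw0cv
    refine ⟨p1, p2, p3, p4, h1, h2, h3, h4,
      hcln p1 (by intro e he; simp [List.mem_append, he]),
      hcln p2 (by intro e he; simp [List.mem_append, he]),
      hcln p3 (by intro e he; simp [List.mem_append, he]),
      hcln p4 (by intro e he; simp [List.mem_append, he]), ?_⟩
    cases hw0z
    exact BP.lbl_append.mp hw0
  choose q1 l r q4 hq1 hl hr hq4 hc1 hc2 hc3 hc4 hlr using key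
  by_cases hcase : ∃ z, ∃ hz : z ∈ clauseVars C, Z.Lbl (l z hz) z
  · right
    obtain ⟨z1, hz1, hlbl1⟩ := hcase
    have hrE1 : ClnE Z C (r z1 hz1) := by
      intro w hw hwcv
      cases hc3 z1 hz1 w hw hwcv
      exact BP.not_lbl_both (hro _ (Z.isPathFrom_append (hl z1 hz1) (hr z1 hz1))) hlbl1 hw
    intro z hz
    have hlbl : Z.Lbl (l z hz) z := by
      by_contra hnl
      have hlE : ClnE Z C (l z hz) := by
        intro w hw hwcv
        cases hc2 z hz w hw hwcv
        exact hnl hw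
      have hm : Z.IsPathFrom x y (l z hz ++ r z1 hz1) :=
        Z.isPathFrom_append (hl z hz) (hr z1 hz1)
      obtain ⟨w0, hw0cv, hw0⟩ := hits_clause hAdj hm
      rcases BP.lbl_append.mp hw0 with h | h
      · exact hlE w0 h hw0cv
      · exact hrE1 w0 h hw0cv
    refine ⟨q1 z hz, l z hz, r z hz, q4 z hz, hq1 z hz, hl z hz, hr z hz, hq4 z hz,
      hc1 z hz, hc2 z hz, hlbl, ?_, hc4 z hz⟩
    intro w hw hwcv
    cases hc3 z hz w hw hwcv
    exact BP.not_lbl_both (hro _ (Z.isPathFrom_append (hl z hz) (hr z hz))) hlbl hw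
  · left
    push_neg at hcase
    intro z hz
    have hright : Z.Lbl (r z hz) z := (hlr z hz).resolve_left (hcase z hz)
    refine ⟨q1 z hz, l z hz, r z hz, q4 z hz, hq1 z hz, hl z hz, hr z hz, hq4 z hz,
      hc1 z hz, ?_, hc3 z hz, hright, hc4 z hz⟩
    intro w hw hwcv
    cases hc2 z hz w hw hwcv
    exact (hcase z hz) hw

/-- A clause with one-sided singleton witnesses is not fixed. -/
theorem not_fx_of_sing (hrep : RepresentsPsi G Z) (hmono : Z.MonotoneBP) {C : Sym2 V} {i : ℕ}
    (hsing : ∀ z ∈ clauseVars C, ∃ q1 l r q4,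
      Z.IsPathFrom Z.source x q1 ∧ Z.IsPathFrom x (avtx Z x P i) l ∧
      Z.IsPathFrom (avtx Z x P i) y r ∧ Z.IsPathFrom y Z.sink q4 ∧
      Cln Z C z q1 ∧ Cln Z C z l ∧ Cln Z C z r ∧ Cln Z C z q4) :
    ¬ Fx G Z x y P C i := by
  rintro ⟨T, hT, hfix⟩
  obtain ⟨z, hzcv, hzT⟩ := Set.exists_of_ssubset hT
  obtain ⟨q1, l, r, q4, h1, h2, h3, h4, hc1, hc2, hc3, hc4⟩ := hsing z hzcv
  set Q := q1 ++ l ++ r ++ q4 with hQ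
  set σ : Assignment V := fun w => decide (Z.Lbl Q w) with hσdef
  have hful : Z.IsPathFrom Z.source Z.sink Q :=
    Z.isPathFrom_append (Z.isPathFrom_append (Z.isPathFrom_append h1 h2) h3) h4
  have hagr : Z.PathAgrees Q σ := by
    intro e he lp hlab
    have hb : lp.2 = true := hmono e lp hlab
    have hlab' : Z.label e = some (lp.1, true) := by
      rw [hlab, ← hb]
    rw [hσdef, hb]
    exact decide_eq_true ⟨e, he, hlab'⟩
  have hsat : psiSat G σ := (hrep σ).mp ⟨Q, hful, hagr⟩
  have hmem : σ ∈ carriedThrough G Z x (avtx Z x P i) y :=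
    ⟨hsat, q1, l, r, q4, h1, h2, h3, h4, hagr⟩
  obtain ⟨w, hwT, hwtrue⟩ := hfix σ hmem
  have hwlbl : Z.Lbl Q w := of_decide_eq_true hwtrue
  have hwcv : w ∈ clauseVars C := hT.1 hwT
  have hwz : w = z := by
    rcases BP.lbl_append.mp hwlbl with h | h
    · rcases BP.lbl_append.mp h with h' | h'
      · rcases BP.lbl_append.mp h' with h'' | h''
        · exact hc1 w h'' hwcv
        · exact hc2 w h'' hwcv
      · exact hc3 w h' hwcv
    · exact hc4 w h hwcv
  cases hwz
  exact hzT hwT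

theorem bw_not_fx (hrep : RepresentsPsi G Z) (hmono : Z.MonotoneBP) {C : Sym2 V} {i : ℕ}
    (hB : BW Z x y P C i) : ¬ Fx G Z x y P C i := by
  refine not_fx_of_sing hrep hmono (fun z hz => ?_)
  obtain ⟨q1, l, r, q4, h1, h2, h3, h4, hc1, hc2, _, hcE, hc4⟩ := hB z hz
  exact ⟨q1, l, r, q4, h1, h2, h3, h4, hc1, hc2, fun w hw hwcv => absurd hwcv (hcE w hw), hc4⟩

theorem aw_not_fx (hrep : RepresentsPsi G Z) (hmono : Z.MonotoneBP) {C : Sym2 V} {i : ℕ}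
    (hA : AW Z x y P C i) : ¬ Fx G Z x y P C i := by
  refine not_fx_of_sing hrep hmono (fun z hz => ?_)
  obtain ⟨q1, l, r, q4, h1, h2, h3, h4, hc1, hlE, hc3, _, hc4⟩ := hA z hz
  exact ⟨q1, l, r, q4, h1, h2, h3, h4, hc1, fun w hw hwcv => absurd hwcv (hlE w hw), hc3, hc4⟩

/-- No variable can witness a B-type clause and an A-type clause at the same position. -/
theorem status_conflict (hro : ∀ p, Z.IsPathFrom x y p → Z.ReadOnce p)
    {C1 C2 : Sym2 V} {w0 : PsiVar V}
    (h1 : w0 ∈ clauseVars C1) (h2 : w0 ∈ clauseVars C2) {i : ℕ}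
    (hB : BW Z x y P C1 i) (hA : AW Z x y P C2 i) : False := by
  obtain ⟨_, lp, _, _, _, hlp, _, _, _, _, hlbl, _, _⟩ := hB w0 h1
  obtain ⟨_, _, rp, _, _, _, hrp, _, _, _, _, hrlbl, _⟩ := hA w0 h2
  exact BP.not_lbl_both (hro _ (Z.isPathFrom_append hlp hrp)) hlbl hrlbl

/-- B-type status propagates forward along `P`. -/
theorem bw_mono (hP : Z.IsPathFrom x y P) (hro : ∀ p, Z.IsPathFrom x y p → Z.ReadOnce p)
    {C : Sym2 V} {i j : ℕ} (hij : i ≤ j) (hjk : j ≤ P.length)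
    (hB : BW Z x y P C i) : BW Z x y P C j := by
  have hdropi := avtx_drop hP i
  have hdropj := avtx_drop hP j
  have hseg := avtx_seg hP hij
  have hdec : P.drop i = (P.drop i).take (j - i) ++ P.drop j := drop_decomp hij
  have hclean : ClnE Z C (P.drop i) := by
    intro w hw hwcv
    obtain ⟨_, lw, _, _, _, hlw, _, _, _, _, hlbl, _, _⟩ := hB w hwcv
    exact BP.not_lbl_both (hro _ (Z.isPathFrom_append hlw hdropi)) hlbl hw
  intro z hz
  obtain ⟨q1, l, r, q4, hq1, hl, hr, hq4, hc1, hc2, hlbl, hcE, hc4⟩ := hB z hz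
  refine ⟨q1, l ++ (P.drop i).take (j - i), P.drop j, q4, hq1,
    Z.isPathFrom_append hl hseg, hdropj, hq4, hc1, ?_, ?_, ?_, hc4⟩
  · intro w hw hwcv
    rcases BP.lbl_append.mp hw with h | h
    · exact hc2 w h hwcv
    · exact absurd hwcv (hclean w (lbl_mono (fun e he => by rw [hdec]; exact List.mem_append.mpr (Or.inl he)) h))
  · exact BP.lbl_append.mpr (Or.inl hlbl)
  · intro w hw
    exact hclean w (lbl_mono (fun e he => by rw [hdec]; exact List.mem_append.mpr (Or.inr he)) hw)

/-- A-type status propagates backward along `P`. -/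
theorem aw_anti (hP : Z.IsPathFrom x y P) (hro : ∀ p, Z.IsPathFrom x y p → Z.ReadOnce p)
    {C : Sym2 V} {i j : ℕ} (hij : i ≤ j) (hjk : j ≤ P.length)
    (hA : AW Z x y P C j) : AW Z x y P C i := by
  have htakei := avtx_take hP i
  have htakej := avtx_take hP j
  have hseg := avtx_seg hP hij
  have hdec : P.take j = P.take i ++ (P.drop i).take (j - i) := take_decomp hij
  have hclean : ClnE Z C (P.take j) := by
    intro w hw hwcv
    obtain ⟨_, _, rw0, _, _, _, hrw, _, _, _, _, hrlbl, _⟩ := hA w hwcv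
    exact BP.not_lbl_both (hro _ (Z.isPathFrom_append htakej hrw)) hw hrlbl
  intro z hz
  obtain ⟨q1, l, r, q4, hq1, hl, hr, hq4, hc1, hlE, hc3, hrlbl, hc4⟩ := hA z hz
  refine ⟨q1, P.take i, (P.drop i).take (j - i) ++ r, q4, hq1, htakei,
    Z.isPathFrom_append hseg hr, hq4, hc1, ?_, ?_, ?_, hc4⟩
  · intro w hw
    exact hclean w (lbl_mono (fun e he => by rw [hdec]; exact List.mem_append.mpr (Or.inl he)) hw)
  · intro w hw hwcv
    rcases BP.lbl_append.mp hw with h | h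
    · exact absurd hwcv (hclean w (lbl_mono (fun e he => by rw [hdec]; exact List.mem_append.mpr (Or.inr he)) h))
    · exact hc3 w h hwcv
  · exact BP.lbl_append.mpr (Or.inr hrlbl)

theorem not_aw_length (hP : Z.IsPathFrom x y P) (hacy : Z.Acyclic) {C : Sym2 V} :
    ¬ AW Z x y P C P.length := by
  intro hA
  obtain ⟨_, _, r, _, _, _, hr, _, _, _, _, hrlbl, _⟩ := hA (Sum.inr C) (inr_mem_clauseVars C)
  rw [avtx_length hP] at hr
  obtain ⟨e, he, _⟩ := hrlbl
  rw [hacy y r hr] at he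
  exact absurd he (List.not_mem_nil (a := e))

theorem not_bw_zero (hacy : Z.Acyclic) {C : Sym2 V} :
    ¬ BW Z x y P C 0 := by
  intro hB
  obtain ⟨_, l, _, _, _, hl, _, _, _, _, hlbl, _, _⟩ := hB (Sum.inr C) (inr_mem_clauseVars C)
  rw [avtx_zero] at hl
  obtain ⟨e, he, _⟩ := hlbl
  rw [hacy x l hl] at he
  exact absurd he (List.not_mem_nil (a := e))

/-- At an A-to-B transition, the transition edge of `P` is labelled with a variable
of the clause. -/
theorem star_label (hP : Z.IsPathFrom x y P)
    {u v : V} (hAdj : (clauseGraph G Z x y).Adj u v) {t : ℕ}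
    (h1 : 1 ≤ t) (h2 : t ≤ P.length)
    (hA : AW Z x y P s(u, v) (t - 1)) (hB : BW Z x y P s(u, v) t) :
    ∃ w ∈ clauseVars s(u, v), ∃ hlt : t - 1 < P.length,
      Z.label (P.get ⟨t - 1, hlt⟩) = some (w, true) := by
  have hlt : t - 1 < P.length := by omega
  set C := s(u, v) with hCdef
  obtain ⟨_, l₀, _, _, _, hl₀, _, _, _, hlE, _, _, _⟩ := hA (Sum.inr C) (inr_mem_clauseVars C)
  obtain ⟨_, _, r₀, _, _, _, hr₀, _, _, _, _, hrE, _⟩ := hB (Sum.inr C) (inr_mem_clauseVars C)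
  have hseg := avtx_seg hP (show t - 1 ≤ t by omega)
  have hS : (P.drop (t - 1)).take (t - (t - 1)) = [P.get ⟨t - 1, hlt⟩] := by
    have h' : t - (t - 1) = 1 := by omega
    rw [h', List.drop_eq_getElem_cons hlt]
    rfl
  rw [hS] at hseg
  have hm : Z.IsPathFrom x y (l₀ ++ [P.get ⟨t - 1, hlt⟩] ++ r₀) :=
    Z.isPathFrom_append (Z.isPathFrom_append hl₀ hseg) hr₀
  obtain ⟨w, hwcv, hwlbl⟩ := hits_clause hAdj hm
  refine ⟨w, hwcv, hlt, ?_⟩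
  rcases BP.lbl_append.mp hwlbl with h | h
  · rcases BP.lbl_append.mp h with h' | h'
    · exact absurd hwcv (hlE w h')
    · obtain ⟨e, he, hle⟩ := h'
      rw [List.mem_singleton] at he
      rw [← he]
      exact hle
  · exact absurd hwcv (hrE w h)



/-- First position where the clause is not A-type. -/
noncomputable def Jl {V : Type} (Z : BP (PsiVar V)) (x y : Fin Z.n) (P : List (Fin Z.m))
    (C : Sym2 V) : ℕ :=
  if h : ∃ i, ¬ AW Z x y P C i then Nat.find h else 0

/-- First position where the clause is B-type (or `P.length + 1` if there is none). -/
noncomputable def Jh {V : Type} (Z : BP (PsiVar V)) (x y : Fin Z.n) (P : List (Fin Z.m))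
    (C : Sym2 V) : ℕ :=
  if h : ∃ i, i ≤ P.length ∧ BW Z x y P C i then Nat.find h else P.length + 1

theorem jl_le (hP : Z.IsPathFrom x y P) (hacy : Z.Acyclic) (C : Sym2 V) :
    Jl Z x y P C ≤ P.length := by
  have hex : ∃ i, ¬ AW Z x y P C i := ⟨P.length, not_aw_length hP hacy⟩
  unfold Jl
  rw [dif_pos hex]
  exact Nat.find_le (not_aw_length hP hacy)

theorem aw_of_lt_jl {C : Sym2 V} {i : ℕ} (h : i < Jl Z x y P C) : AW Z x y P C i := by
  unfold Jl at h
  split at h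
  · next hex => exact not_not.mp (Nat.find_min hex h)
  · omega

theorem not_aw_of_ge (hP : Z.IsPathFrom x y P) (hro : ∀ p, Z.IsPathFrom x y p → Z.ReadOnce p)
    (hacy : Z.Acyclic) {C : Sym2 V} {i : ℕ}
    (h : Jl Z x y P C ≤ i) (hik : i ≤ P.length) : ¬ AW Z x y P C i := by
  intro hA
  have hex : ∃ i, ¬ AW Z x y P C i := ⟨P.length, not_aw_length hP hacy⟩
  have hspec : ¬ AW Z x y P C (Nat.find hex) := Nat.find_spec hex
  have hJl : Jl Z x y P C = Nat.find hex := by unfold Jl; rw [dif_pos hex]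
  exact hspec (aw_anti hP hro (hJl ▸ h) hik hA)

theorem bw_of_ge (hP : Z.IsPathFrom x y P) (hro : ∀ p, Z.IsPathFrom x y p → Z.ReadOnce p)
    {C : Sym2 V} {i : ℕ} (h : Jh Z x y P C ≤ i) (hik : i ≤ P.length) : BW Z x y P C i := by
  unfold Jh at h
  split at h
  · next hex =>
    obtain ⟨h1, h2⟩ := Nat.find_spec hex
    exact bw_mono hP hro h hik h2
  · omega

theorem not_bw_of_lt {C : Sym2 V} {i : ℕ} (h : i < Jh Z x y P C) (hik : i ≤ P.length) :
    ¬ BW Z x y P C i := by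
  intro hB
  unfold Jh at h
  split at h
  · next hex => exact Nat.find_min hex h ⟨hik, hB⟩
  · next hex => exact hex ⟨i, hik, hB⟩

theorem jh_pos (hacy : Z.Acyclic) {C : Sym2 V} : 1 ≤ Jh Z x y P C := by
  unfold Jh
  split
  · next hex =>
    rcases Nat.eq_zero_or_pos (Nat.find hex) with h | h
    · exact absurd (h ▸ (Nat.find_spec hex)).2 (not_bw_zero hacy)
    · exact h
  · omega

theorem jh_le_succ {C : Sym2 V} : Jh Z x y P C ≤ P.length + 1 := by
  unfold Jh
  split
  · next hex => exact (Nat.find_spec hex).1.trans (Nat.le_succ _)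
  · omega

/-- Shared-variable conflict: the activity intervals of clauses sharing a variable
intersect. -/
theorem jl_le_jh_shared (hP : Z.IsPathFrom x y P)
    (hro : ∀ p, Z.IsPathFrom x y p → Z.ReadOnce p) (hacy : Z.Acyclic)
    {C1 C2 : Sym2 V} {w0 : PsiVar V}
    (hw1 : w0 ∈ clauseVars C1) (hw2 : w0 ∈ clauseVars C2) :
    Jl Z x y P C2 ≤ Jh Z x y P C1 := by
  by_contra hcon
  push_neg at hcon
  have hlen : Jh Z x y P C1 ≤ P.length := (hcon.trans_le (jl_le hP hacy C2)).le
  have hB : BW Z x y P C1 (Jh Z x y P C1) := bw_of_ge hP hro le_rfl hlen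
  have hA : AW Z x y P C2 (Jh Z x y P C1) := aw_of_lt_jl hcon
  exact status_conflict hro hw1 hw2 hB hA

theorem fx_window (hP : Z.IsPathFrom x y P) (hro : ∀ p, Z.IsPathFrom x y p → Z.ReadOnce p)
    (hacy : Z.Acyclic) {u v : V} (hAdj : (clauseGraph G Z x y).Adj u v) {τ : ℕ}
    (h1 : Jl Z x y P s(u, v) ≤ τ) (h2 : τ < Jh Z x y P s(u, v)) (h3 : τ ≤ P.length) :
    Fx G Z x y P s(u, v) τ := by
  by_contra hnf
  rcases notFx_cases hro hAdj hnf with hA | hB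
  · exact not_aw_of_ge hP hro hacy h1 h3 hA
  · exact not_bw_of_lt h2 h3 hB

/-- The star case: an empty fixed window pins a labelled edge of `P`. -/
theorem star_of_eq (hP : Z.IsPathFrom x y P) (hro : ∀ p, Z.IsPathFrom x y p → Z.ReadOnce p)
    (hacy : Z.Acyclic) {u v : V} (hAdj : (clauseGraph G Z x y).Adj u v)
    (heq : Jl Z x y P s(u, v) = Jh Z x y P s(u, v)) :
    ∃ w ∈ clauseVars s(u, v), ∃ hlt : Jh Z x y P s(u, v) - 1 < P.length,
      Z.label (P.get ⟨Jh Z x y P s(u, v) - 1, hlt⟩) = some (w, true) := by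
  set t := Jh Z x y P s(u, v) with ht
  have h1 : 1 ≤ t := jh_pos hacy
  have h2 : t ≤ P.length := heq ▸ jl_le hP hacy _
  have hA : AW Z x y P s(u, v) (t - 1) := aw_of_lt_jl (by omega : t - 1 < Jl Z x y P s(u, v))
  have hB : BW Z x y P s(u, v) t := bw_of_ge hP hro le_rfl h2
  exact star_label hP hAdj h1 h2 hA hB

end StatusTheory
section CutMachine

attribute [local instance] Classical.propDecidable

variable {V : Type} [Fintype V] [DecidableEq V]

/-- Smaller key of the two endpoints. -/
def eLo (key : V → ℕ) : Sym2 V → ℕ :=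
  Sym2.lift ⟨fun a b => min (key a) (key b), fun _ _ => Nat.min_comm _ _⟩

/-- Larger key of the two endpoints. -/
def eHi (key : V → ℕ) : Sym2 V → ℕ :=
  Sym2.lift ⟨fun a b => max (key a) (key b), fun _ _ => Nat.max_comm _ _⟩

theorem key_le_eHi {key : V → ℕ} {w : V} {e : Sym2 V} (h : w ∈ e) : key w ≤ eHi key e := by
  induction e using Sym2.ind with
  | _ a b =>
    rw [Sym2.mem_iff] at h
    rcases h with rfl | rfl
    · exact le_max_left _ _
    · exact le_max_right _ _

theorem eLo_le_key {key : V → ℕ} {w : V} {e : Sym2 V} (h : w ∈ e) : eLo key e ≤ key w := by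
  induction e using Sym2.ind with
  | _ a b =>
    rw [Sym2.mem_iff] at h
    rcases h with rfl | rfl
    · exact min_le_left _ _
    · exact min_le_right _ _

theorem exists_eHi_mem (key : V → ℕ) (e : Sym2 V) : ∃ w ∈ e, key w = eHi key e := by
  induction e using Sym2.ind with
  | _ a b =>
    rcases le_total (key a) (key b) with h | h
    · exact ⟨b, Sym2.mem_mk_right a b, (max_eq_right h).symm⟩
    · exact ⟨a, Sym2.mem_mk_left a b, (max_eq_left h).symm⟩

/-- The crossing edges at cut `j`. -/
def crossing (E : Finset (Sym2 V)) (key : V → ℕ) (j : ℕ) : Finset (Sym2 V) :=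
  E.filter (fun e => eLo key e ≤ j ∧ j < eHi key e)

/-- A set of edges is a matching if distinct members share no vertex. -/
def IsMatching (M : Finset (Sym2 V)) : Prop :=
  ∀ e ∈ M, ∀ f ∈ M, e ≠ f → ∀ w : V, w ∈ e → w ∉ f

theorem isMatching_subset {M N : Finset (Sym2 V)} (h : N ⊆ M) (hM : IsMatching M) :
    IsMatching N := fun e he f hf hne => hM e (h he) f (h hf) hne

theorem exists_max_matching (base amb : Finset (Sym2 V)) (hb : base ⊆ amb)
    (hbm : IsMatching base) :
    ∃ M, base ⊆ M ∧ M ⊆ amb ∧ IsMatching M ∧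
      ∀ e ∈ amb, IsMatching (insert e M) → e ∈ M := by
  classical
  set S := amb.powerset.filter (fun m => base ⊆ m ∧ IsMatching m) with hS
  have hne : S.Nonempty := ⟨base, by
    rw [hS, Finset.mem_filter, Finset.mem_powerset]
    exact ⟨hb, le_refl _, hbm⟩⟩
  obtain ⟨M, hM, hmax⟩ := S.exists_max_image Finset.card hne
  rw [hS, Finset.mem_filter, Finset.mem_powerset] at hM
  obtain ⟨hsub, hbase, hmatch⟩ := hM
  refine ⟨M, hbase, hsub, hmatch, ?_⟩
  intro e he hins
  by_contra hnot
  have hmem : insert e M ∈ S := by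
    rw [hS, Finset.mem_filter, Finset.mem_powerset]
    exact ⟨Finset.insert_subset he hsub, hbase.trans (Finset.subset_insert _ _), hins⟩
  have := hmax _ hmem
  rw [Finset.card_insert_of_notMem hnot] at this
  omega

/-- A maximal matching of `amb` containing `base` (when meaningful). -/
noncomputable def maxMatchExt (base amb : Finset (Sym2 V)) : Finset (Sym2 V) :=
  if h : base ⊆ amb ∧ IsMatching base then
    (exists_max_matching base amb h.1 h.2).choose
  else ∅

theorem maxMatchExt_spec {base amb : Finset (Sym2 V)} (h1 : base ⊆ amb) (h2 : IsMatching base) :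
    base ⊆ maxMatchExt base amb ∧ maxMatchExt base amb ⊆ amb ∧
      IsMatching (maxMatchExt base amb) ∧
      ∀ e ∈ amb, IsMatching (insert e (maxMatchExt base amb)) → e ∈ maxMatchExt base amb := by
  rw [maxMatchExt, dif_pos ⟨h1, h2⟩]
  exact (exists_max_matching base amb h1 h2).choose_spec

/-- The persistent chain of maximal matchings of the crossing sets. -/
noncomputable def Mchain (E : Finset (Sym2 V)) (key : V → ℕ) : ℕ → Finset (Sym2 V)
  | 0 => maxMatchExt ∅ (crossing E key 0)
  | j + 1 => maxMatchExt (Mchain E key j ∩ crossing E key (j + 1)) (crossing E key (j + 1))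

theorem mchain_spec (E : Finset (Sym2 V)) (key : V → ℕ) (j : ℕ) :
    Mchain E key j ⊆ crossing E key j ∧ IsMatching (Mchain E key j) ∧
      (∀ e ∈ crossing E key j, IsMatching (insert e (Mchain E key j)) → e ∈ Mchain E key j) := by
  induction j with
  | zero =>
    have h := maxMatchExt_spec (base := (∅ : Finset (Sym2 V))) (amb := crossing E key 0)
      (Finset.empty_subset _) (fun e he => absurd he (Finset.notMem_empty e))
    exact ⟨h.2.1, h.2.2.1, h.2.2.2⟩
  | succ j ih =>
    have h := maxMatchExt_spec (base := Mchain E key j ∩ crossing E key (j + 1))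
      (amb := crossing E key (j + 1)) Finset.inter_subset_right
      (isMatching_subset Finset.inter_subset_left ih.2.1)
    exact ⟨h.2.1, h.2.2.1, h.2.2.2⟩

theorem mchain_sub (E : Finset (Sym2 V)) (key : V → ℕ) (j : ℕ) :
    Mchain E key j ⊆ crossing E key j := (mchain_spec E key j).1

theorem mchain_matching (E : Finset (Sym2 V)) (key : V → ℕ) (j : ℕ) :
    IsMatching (Mchain E key j) := (mchain_spec E key j).2.1

theorem mchain_persist {E : Finset (Sym2 V)} {key : V → ℕ} {j : ℕ} {e : Sym2 V}
    (h1 : e ∈ Mchain E key j) (h2 : e ∈ crossing E key (j + 1)) :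
    e ∈ Mchain E key (j + 1) := by
  have h := maxMatchExt_spec (base := Mchain E key j ∩ crossing E key (j + 1))
    (amb := crossing E key (j + 1)) Finset.inter_subset_right
    (isMatching_subset Finset.inter_subset_left (mchain_matching E key j))
  exact h.1 (Finset.mem_inter.mpr ⟨h1, h2⟩)

theorem mchain_maximal {E : Finset (Sym2 V)} {key : V → ℕ} {j : ℕ} {e : Sym2 V}
    (h1 : e ∈ crossing E key j) (h2 : e ∉ Mchain E key j) :
    ∃ f ∈ Mchain E key j, ∃ w : V, w ∈ e ∧ w ∈ f := by
  by_contra hcon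
  push_neg at hcon
  refine h2 ((mchain_spec E key j).2.2 e h1 ?_)
  intro e1 he1 e2 he2 hne w hw1
  rcases Finset.mem_insert.mp he1 with rfl | he1'
  · rcases Finset.mem_insert.mp he2 with rfl | he2'
    · exact absurd rfl hne
    · exact fun hw2 => hcon e2 he2' w hw1 hw2
  · rcases Finset.mem_insert.mp he2 with rfl | he2'
    · exact fun hw2 => hcon e1 he1' w hw2 hw1
    · exact mchain_matching E key j e1 he1' e2 he2' hne w hw1

/-- Edges persist in the chain until their upper endpoint. -/
theorem mchain_persist' {E : Finset (Sym2 V)} {key : V → ℕ} {j j' : ℕ} {e : Sym2 V}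
    (h1 : e ∈ Mchain E key j) (hjj : j ≤ j') (hhi : j' < eHi key e) :
    e ∈ Mchain E key j' := by
  induction j' with
  | zero =>
    have : j = 0 := by omega
    exact this ▸ h1
  | succ j'' ih =>
    rcases Nat.lt_or_ge j (j'' + 1) with h | h
    · have he : e ∈ Mchain E key j'' := ih (by omega) (by omega)
      have hcr : e ∈ crossing E key j'' := mchain_sub E key j'' he
      rw [crossing, Finset.mem_filter] at hcr
      refine mchain_persist he ?_
      rw [crossing, Finset.mem_filter]
      exact ⟨hcr.1, by omega, hhi⟩
    · have : j = j'' + 1 := by omega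
      exact this ▸ h1

/-- `v` is matched at cut `j`. -/
def vIn (E : Finset (Sym2 V)) (key : V → ℕ) (v : V) (j : ℕ) : Prop :=
  ∃ e ∈ Mchain E key j, v ∈ e

end CutMachine
section CutMachine2

attribute [local instance] Classical.propDecidable

variable {V : Type} [Fintype V] [DecidableEq V] {E : Finset (Sym2 V)} {key : V → ℕ}

theorem eLo_mk (key : V → ℕ) (a b : V) : eLo key s(a, b) = min (key a) (key b) := rfl

theorem eHi_mk (key : V → ℕ) (a b : V) : eHi key s(a, b) = max (key a) (key b) := rfl

/-- Core exchange argument: a vertex beyond its own key which is free but matched later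
gives a contradiction. -/
theorem g1 (hinj : Function.Injective key) {v : V} {j j2 : ℕ}
    (hkey : key v ≤ j) (hfree : ¬ vIn E key v j) {e2 : Sym2 V}
    (hv : v ∈ e2) (he2 : e2 ∈ Mchain E key j2) (hjj : j < j2) : False := by
  obtain ⟨z, rfl⟩ := Sym2.mem_iff_exists.mp hv
  have hcr2 := mchain_sub E key j2 he2
  rw [crossing, Finset.mem_filter] at hcr2
  obtain ⟨hE2, hlo2, hhi2⟩ := hcr2
  have hkz : j2 < key z := by
    by_contra h
    push_neg at h
    have : eHi key s(v, z) ≤ j2 := by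
      rw [eHi_mk]
      exact max_le (by omega) h
    omega
  have hcrj : s(v, z) ∈ crossing E key j := by
    rw [crossing, Finset.mem_filter]
    exact ⟨hE2, (eLo_le_key (Sym2.mem_mk_left v z)).trans hkey, hjj.trans hhi2⟩
  have hnotin : s(v, z) ∉ Mchain E key j :=
    fun hmem => hfree ⟨_, hmem, Sym2.mem_mk_left v z⟩
  obtain ⟨f, hf, w, hwe, hwf⟩ := mchain_maximal hcrj hnotin
  have hwz : w = z := by
    rw [Sym2.mem_iff] at hwe
    rcases hwe with rfl | rfl
    · exact absurd ⟨f, hf, hwf⟩ hfree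
    · rfl
  subst hwz
  have hf2 : f ∈ Mchain E key j2 :=
    mchain_persist' hf hjj.le (lt_of_lt_of_le hkz (key_le_eHi hwf))
  have hne : f ≠ s(v, w) := fun h => hnotin (h ▸ hf)
  exact mchain_matching E key j2 f hf2 _ he2 hne w hwf (by rw [Sym2.mem_iff]; right; rfl)

theorem vIn_until {v : V} {j j' : ℕ} (h : vIn E key v j) (hjj : j ≤ j') (hk : j' < key v) :
    vIn E key v j' := by
  obtain ⟨e, he, hv⟩ := h
  exact ⟨e, mchain_persist' he hjj (lt_of_lt_of_le hk (key_le_eHi hv)), hv⟩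

theorem vIn_at_key (hinj : Function.Injective key) {v : V} {j : ℕ}
    (h : vIn E key v j) (hk : key v < j) : vIn E key v (key v) := by
  by_contra hfree
  obtain ⟨e, he, hv⟩ := h
  exact g1 hinj le_rfl hfree hv he hk

theorem vIn_interval (hinj : Function.Injective key) {v : V} {j1 j j2 : ℕ}
    (h1 : vIn E key v j1) (h2 : vIn E key v j2) (ha : j1 ≤ j) (hb : j ≤ j2) :
    vIn E key v j := by
  by_contra hfree
  rcases Nat.lt_or_ge j (key v) with hk | hk
  · exact hfree (vIn_until h1 ha hk)
  · rcases Nat.lt_or_ge j j2 with hlt | hge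
    · obtain ⟨e2, he2, hv2⟩ := h2
      exact g1 hinj hk hfree hv2 he2 hlt
    · have : j = j2 := by omega
      exact hfree (this ▸ h2)

theorem dropped_edge {v : V} {j : ℕ} (hj : 1 ≤ j) (h1 : vIn E key v (j - 1))
    (h2 : ¬ vIn E key v j) :
    ∃ g ∈ Mchain E key (j - 1), v ∈ g ∧ eHi key g = j := by
  obtain ⟨e, he, hv⟩ := h1
  refine ⟨e, he, hv, ?_⟩
  have hcr := mchain_sub E key (j - 1) he
  rw [crossing, Finset.mem_filter] at hcr
  by_contra hne
  have hgt : j < eHi key e := by omega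
  exact h2 ⟨e, mchain_persist' he (by omega) hgt, hv⟩

theorem dying_unique (hinj : Function.Injective key) {j : ℕ} {ga gb : Sym2 V}
    (ha : ga ∈ Mchain E key j) (hb : gb ∈ Mchain E key j)
    (hhi : eHi key ga = eHi key gb) : ga = gb := by
  obtain ⟨wa, hwa, hka⟩ := exists_eHi_mem key ga
  obtain ⟨wb, hwb, hkb⟩ := exists_eHi_mem key gb
  have hww : wa = wb := hinj (by rw [hka, hkb, hhi])
  subst hww
  by_contra hne
  exact mchain_matching E key j ga ha gb hb hne wa hwa hwb

/-- Global bound on matched cut indices. -/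
def KB (key : V → ℕ) : ℕ := (Finset.univ.sup key) + 1

theorem key_lt_KB (v : V) : key v < KB key := by
  have : key v ≤ Finset.univ.sup key := Finset.le_sup (Finset.mem_univ v)
  unfold KB
  omega

theorem vIn_lt_KB {v : V} {j : ℕ} (h : vIn E key v j) : j < KB key := by
  obtain ⟨e, he, _⟩ := h
  have hcr := mchain_sub E key j he
  rw [crossing, Finset.mem_filter] at hcr
  obtain ⟨w, _, hkw⟩ := exists_eHi_mem key e
  have h1 : key w ≤ Finset.univ.sup key := Finset.le_sup (Finset.mem_univ w)
  have h2 : j < eHi key e := hcr.2.2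
  unfold KB
  omega

/-- The (contiguous) set of cuts at which `v` is matched. -/
noncomputable def BlkF (E : Finset (Sym2 V)) (key : V → ℕ) (v : V) : Finset ℕ :=
  (Finset.range (KB key)).filter (fun j => vIn E key v j)

theorem mem_BlkF {v : V} {j : ℕ} : j ∈ BlkF E key v ↔ vIn E key v j := by
  rw [BlkF, Finset.mem_filter, Finset.mem_range]
  exact ⟨fun h => h.2, fun h => ⟨vIn_lt_KB h, h⟩⟩

/-- First slot of the presence interval of `v`. -/
noncomputable def loSlot (E : Finset (Sym2 V)) (key : V → ℕ) (v : V) : ℕ :=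
  if h : (BlkF E key v).Nonempty then min (2 * (BlkF E key v).min' h) (2 * key v - 1)
  else 2 * key v - 1

/-- Last slot of the presence interval of `v`. -/
noncomputable def hiSlot (E : Finset (Sym2 V)) (key : V → ℕ) (v : V) : ℕ :=
  if h : (BlkF E key v).Nonempty then max (2 * (BlkF E key v).max' h + 2) (2 * key v)
  else 2 * key v

theorem blo_le_key (hinj : Function.Injective key) {v : V} (h : (BlkF E key v).Nonempty) :
    (BlkF E key v).min' h ≤ key v := by
  have hm : vIn E key v ((BlkF E key v).min' h) := mem_BlkF.mp ((BlkF E key v).min'_mem h)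
  by_contra hcon
  push_neg at hcon
  have := vIn_at_key hinj hm hcon
  have := (BlkF E key v).min'_le _ (mem_BlkF.mpr this)
  omega

theorem key_le_bhi_succ {v : V} (h : (BlkF E key v).Nonempty) :
    key v ≤ (BlkF E key v).max' h + 1 := by
  have hm : vIn E key v ((BlkF E key v).max' h) := mem_BlkF.mp ((BlkF E key v).max'_mem h)
  by_contra hcon
  push_neg at hcon
  have h2 : vIn E key v (key v - 1) := vIn_until hm (by omega) (by omega)
  have := (BlkF E key v).le_max' _ (mem_BlkF.mpr h2)
  omega

theorem present_pos (v : V) {t : ℕ} (h1 : 2 * key v - 1 ≤ t) (h2 : t ≤ 2 * key v) :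
    loSlot E key v ≤ t ∧ t ≤ hiSlot E key v := by
  unfold loSlot hiSlot
  constructor
  · split
    · exact (min_le_right _ _).trans h1
    · exact h1
  · split
    · exact h2.trans (le_max_right _ _)
    · exact h2

theorem present_block {v : V} {j t : ℕ} (h : vIn E key v j) (h1 : 2 * j ≤ t)
    (h2 : t ≤ 2 * j + 1) : loSlot E key v ≤ t ∧ t ≤ hiSlot E key v := by
  have hne : (BlkF E key v).Nonempty := ⟨j, mem_BlkF.mpr h⟩
  have hmin := (BlkF E key v).min'_le _ (mem_BlkF.mpr h)
  have hmax := (BlkF E key v).le_max' _ (mem_BlkF.mpr h)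
  unfold loSlot hiSlot
  rw [dif_pos hne, dif_pos hne]
  constructor
  · exact (min_le_left _ _).trans (by omega)
  · exact le_trans (by omega) (le_max_left _ _)

theorem present_char (hinj : Function.Injective key) {v : V} {t : ℕ}
    (hlo : loSlot E key v ≤ t) (hhi : t ≤ hiSlot E key v) :
    vIn E key v (t / 2) ∨ (2 * key v - 1 ≤ t ∧ t ≤ 2 * key v) ∨
      (1 ≤ t / 2 ∧ t = 2 * (t / 2) ∧ vIn E key v (t / 2 - 1) ∧ ¬ vIn E key v (t / 2)) := by
  unfold loSlot at hlo
  unfold hiSlot at hhi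
  by_cases h : (BlkF E key v).Nonempty
  · rw [dif_pos h] at hlo hhi
    set b0 := (BlkF E key v).min' h with hb0
    set b1 := (BlkF E key v).max' h with hb1
    have f1 : b0 ≤ key v := blo_le_key hinj h
    have f2 : key v ≤ b1 + 1 := key_le_bhi_succ h
    have f3 : vIn E key v b0 := mem_BlkF.mp ((BlkF E key v).min'_mem h)
    have f4 : vIn E key v b1 := mem_BlkF.mp ((BlkF E key v).max'_mem h)
    have f5 : b0 ≤ b1 := (BlkF E key v).min'_le _ ((BlkF E key v).max'_mem h)
    by_cases hc : 2 * b0 ≤ t ∧ t ≤ 2 * b1 + 1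
    · exact Or.inl (vIn_interval hinj f3 f4 (by omega) (by omega))
    · by_cases he : 2 * key v - 1 ≤ t ∧ t ≤ 2 * key v
      · exact Or.inr (Or.inl he)
      · refine Or.inr (Or.inr ?_)
        have ht : t = 2 * (b1 + 1) := by omega
        have ht2 : t / 2 = b1 + 1 := by omega
        refine ⟨by omega, by omega, ?_, ?_⟩
        · rw [ht2]
          simpa using f4
        · rw [ht2]
          intro hvin
          have := (BlkF E key v).le_max' _ (mem_BlkF.mpr hvin)
          omega
  · rw [dif_neg h] at hlo hhi
    exact Or.inr (Or.inl ⟨hlo, hhi⟩)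

end CutMachine2
section CutMachine3

attribute [local instance] Classical.propDecidable

variable {V : Type} [Fintype V] [DecidableEq V] {E : Finset (Sym2 V)} {key : V → ℕ}

theorem sym2_filter_card_le (e : Sym2 V) : (Finset.univ.filter (· ∈ e)).card ≤ 2 := by
  induction e using Sym2.ind with
  | _ a b =>
    have hsub : Finset.univ.filter (· ∈ s(a, b)) ⊆ {a, b} := by
      intro w hw
      rw [Finset.mem_filter, Sym2.mem_iff] at hw
      rcases hw.2 with rfl | rfl <;> simp
    refine (Finset.card_le_card hsub).trans ?_
    refine (Finset.card_insert_le _ _).trans ?_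
    simp

/-- The width bound: each slot's bag has at most `2K + 2` vertices. -/
theorem bag_card_le (hinj : Function.Injective key) {K : ℕ}
    (hK : ∀ j, (Mchain E key j).card ≤ K) (t : ℕ) :
    (Finset.univ.filter (fun v => loSlot E key v ≤ t ∧ t ≤ hiSlot E key v)).card
      ≤ 2 * K + 2 := by
  set j := t / 2 with hj
  set A := (Mchain E key j).biUnion (fun e => Finset.univ.filter (· ∈ e)) with hA
  set B := Finset.univ.filter (fun v : V => key v = (t + 1) / 2) with hB
  set C := Finset.univ.filter (fun v : V =>
    vIn E key v (j - 1) ∧ ¬ vIn E key v j ∧ key v ≠ (t + 1) / 2 ∧ 1 ≤ j ∧ t = 2 * j) with hC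
  have hsub : Finset.univ.filter (fun v => loSlot E key v ≤ t ∧ t ≤ hiSlot E key v)
      ⊆ A ∪ B ∪ C := by
    intro v hv
    rw [Finset.mem_filter] at hv
    rcases present_char hinj hv.2.1 hv.2.2 with h | h | h
    · obtain ⟨e, he, hve⟩ := h
      refine Finset.mem_union_left _ (Finset.mem_union_left _ ?_)
      rw [hA, Finset.mem_biUnion]
      exact ⟨e, he, Finset.mem_filter.mpr ⟨Finset.mem_univ v, hve⟩⟩
    · refine Finset.mem_union_left _ (Finset.mem_union_right _ ?_)
      rw [hB, Finset.mem_filter]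
      exact ⟨Finset.mem_univ v, by omega⟩
    · obtain ⟨h1, h2, h3, h4⟩ := h
      by_cases hkey : key v = (t + 1) / 2
      · refine Finset.mem_union_left _ (Finset.mem_union_right _ ?_)
        rw [hB, Finset.mem_filter]
        exact ⟨Finset.mem_univ v, hkey⟩
      · refine Finset.mem_union_right _ ?_
        rw [hC, Finset.mem_filter]
        exact ⟨Finset.mem_univ v, h3, h4, hkey, h1, h2⟩
  have hcardA : A.card ≤ 2 * K := by
    refine Finset.card_biUnion_le.trans ?_
    calc ∑ e ∈ Mchain E key j, (Finset.univ.filter (· ∈ e)).card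
        ≤ (Mchain E key j).card * 2 :=
          Finset.sum_le_card_nsmul _ _ 2 (fun e _ => sym2_filter_card_le e)
      _ ≤ 2 * K := by have := hK j; omega
  have hcardB : B.card ≤ 1 := by
    refine Finset.card_le_one.mpr (fun v1 h1 v2 h2 => ?_)
    rw [hB, Finset.mem_filter] at h1 h2
    exact hinj (h1.2.trans h2.2.symm)
  have hcardC : C.card ≤ 1 := by
    refine Finset.card_le_one.mpr (fun v1 h1 v2 h2 => ?_)
    rw [hC, Finset.mem_filter] at h1 h2
    obtain ⟨-, hin1, hout1, hkey1, hj1, ht1⟩ := h1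
    obtain ⟨-, hin2, hout2, hkey2, hj2, ht2⟩ := h2
    obtain ⟨g1', hg1, hvg1, hhi1⟩ := dropped_edge hj1 hin1 hout1
    obtain ⟨g2', hg2, hvg2, hhi2⟩ := dropped_edge hj2 hin2 hout2
    have hgg : g1' = g2' := dying_unique hinj hg1 hg2 (hhi1.trans hhi2.symm)
    subst hgg
    have hj' : (t + 1) / 2 = j := by omega
    rw [hj'] at hkey1 hkey2
    obtain ⟨w, hwg, hkw⟩ := exists_eHi_mem key g1'
    rw [hhi1] at hkw
    induction g1' using Sym2.ind with
    | _ p q =>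
      rw [Sym2.mem_iff] at hvg1 hvg2 hwg
      rcases hvg1 with rfl | rfl <;> rcases hvg2 with rfl | rfl <;>
        first
          | rfl
          | (rcases hwg with rfl | rfl
             · exact absurd hkw hkey1
             · exact absurd hkw hkey2)
          | (rcases hwg with rfl | rfl
             · exact absurd hkw hkey2
             · exact absurd hkw hkey1)
  calc (Finset.univ.filter (fun v => loSlot E key v ≤ t ∧ t ≤ hiSlot E key v)).card
      ≤ (A ∪ B ∪ C).card := Finset.card_le_card hsub
    _ ≤ (A ∪ B).card + C.card := Finset.card_union_le _ _
    _ ≤ A.card + B.card + C.card := by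
        have := Finset.card_union_le A B
        omega
    _ ≤ 2 * K + 2 := by omega

theorem cover_aux (hinj : Function.Injective key) {a b : V} (he : s(a, b) ∈ E)
    (hk : key a < key b) :
    ∃ t ≤ 2 * Finset.univ.sup key,
      (loSlot E key a ≤ t ∧ t ≤ hiSlot E key a) ∧
      (loSlot E key b ≤ t ∧ t ≤ hiSlot E key b) := by
  have hsupa : key a ≤ Finset.univ.sup key := Finset.le_sup (Finset.mem_univ a)
  have hsupb : key b ≤ Finset.univ.sup key := Finset.le_sup (Finset.mem_univ b)
  by_cases hm : ∃ j, s(a, b) ∈ Mchain E key j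
  · obtain ⟨j, hj⟩ := hm
    have hja : vIn E key a j := ⟨_, hj, Sym2.mem_mk_left a b⟩
    have hjb : vIn E key b j := ⟨_, hj, Sym2.mem_mk_right a b⟩
    have hjKB : j < KB key := vIn_lt_KB hja
    refine ⟨2 * j, by unfold KB at hjKB; omega, ?_, ?_⟩
    · exact present_block hja le_rfl (by omega)
    · exact present_block hjb le_rfl (by omega)
  · push_neg at hm
    have hshare : ∀ j, key a ≤ j → j < key b → (vIn E key a j ∨ vIn E key b j) := by
      intro j h1 h2
      have hcr : s(a, b) ∈ crossing E key j := by
        rw [crossing, Finset.mem_filter, eLo_mk, eHi_mk]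
        exact ⟨he, by omega, by omega⟩
      obtain ⟨f, hf, w, hwe, hwf⟩ := mchain_maximal hcr (hm j)
      rw [Sym2.mem_iff] at hwe
      rcases hwe with rfl | rfl
      · exact Or.inl ⟨f, hf, hwf⟩
      · exact Or.inr ⟨f, hf, hwf⟩
    by_cases hA : vIn E key a (key a)
    · by_cases hB1 : ∀ j, key a ≤ j → j < key b → vIn E key a j
      · refine ⟨2 * key b - 1, by omega, ?_, ?_⟩
        · exact present_block (hB1 (key b - 1) (by omega) (by omega)) (by omega) (by omega)
        · exact present_pos b (by omega) (by omega)
      · push_neg at hB1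
        obtain ⟨j0, hj1, hj2, hj3⟩ := hB1
        have hexQ : ∃ j, key a ≤ j ∧ j < key b ∧ ¬ vIn E key a j := ⟨j0, hj1, hj2, hj3⟩
        set jF := Nat.find hexQ with hjF
        obtain ⟨hs1, hs2, hs3⟩ := Nat.find_spec hexQ
        rw [← hjF] at hs1 hs2 hs3
        have hFa : key a < jF := by
          by_contra hcon
          push_neg at hcon
          have heq : jF = key a := by omega
          rw [heq] at hs3
          exact hs3 hA
        have hin : vIn E key a (jF - 1) := by
          rcases Nat.eq_or_lt_of_le (show key a ≤ jF - 1 by omega) with h | h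
          · rw [← h]; exact hA
          · by_contra hcon
            exact Nat.find_min hexQ (show jF - 1 < jF by omega) ⟨by omega, by omega, hcon⟩
        have hb : vIn E key b jF := (hshare jF (by omega) hs2).resolve_left hs3
        refine ⟨2 * jF, by omega, ?_, ?_⟩
        · constructor
          · have hne : (BlkF E key a).Nonempty := ⟨key a, mem_BlkF.mpr hA⟩
            have hmin := (BlkF E key a).min'_le _ (mem_BlkF.mpr hA)
            unfold loSlot
            rw [dif_pos hne]
            exact (min_le_left _ _).trans (by omega)
          · have hne : (BlkF E key a).Nonempty := ⟨jF - 1, mem_BlkF.mpr hin⟩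
            have hmax := (BlkF E key a).le_max' _ (mem_BlkF.mpr hin)
            unfold hiSlot
            rw [dif_pos hne]
            exact le_trans (by omega) (le_max_left _ _)
        · exact present_block hb le_rfl (by omega)
    · refine ⟨2 * key a, by omega, ?_, ?_⟩
      · exact present_pos a (by omega) le_rfl
      · have hb : vIn E key b (key a) := (hshare (key a) le_rfl hk).resolve_left hA
        exact present_block hb le_rfl (by omega)

theorem cover_edge_slot (hinj : Function.Injective key) {e : Sym2 V} (he : e ∈ E)
    (hnd : ¬ e.IsDiag) :
    ∃ t ≤ 2 * Finset.univ.sup key, ∀ w ∈ e,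
      loSlot E key w ≤ t ∧ t ≤ hiSlot E key w := by
  induction e using Sym2.ind with
  | _ a b =>
    have hab : a ≠ b := by simpa using hnd
    have hkab : key a ≠ key b := fun h => hab (hinj h)
    rcases Nat.lt_or_ge (key a) (key b) with h | h
    · obtain ⟨t, ht, ha', hb'⟩ := cover_aux hinj he h
      refine ⟨t, ht, fun w hw => ?_⟩
      rw [Sym2.mem_iff] at hw
      rcases hw with rfl | rfl
      exacts [ha', hb']
    · have h' : key b < key a := by omega
      have he' : s(b, a) ∈ E := by rwa [Sym2.eq_swap] at he
      obtain ⟨t, ht, hb', ha'⟩ := cover_aux hinj he' h'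
      refine ⟨t, ht, fun w hw => ?_⟩
      rw [Sym2.mem_iff] at hw
      rcases hw with rfl | rfl
      exacts [ha', hb']

end CutMachine3
section CutMachine4

attribute [local instance] Classical.propDecidable

variable {V : Type} [Fintype V] [DecidableEq V]

theorem exists_eLo_mem (key : V → ℕ) (e : Sym2 V) : ∃ w ∈ e, key w = eLo key e := by
  induction e using Sym2.ind with
  | _ a b =>
    rcases le_total (key a) (key b) with h | h
    · exact ⟨a, Sym2.mem_mk_left a b, (min_eq_left h).symm⟩
    · exact ⟨b, Sym2.mem_mk_right a b, (min_eq_right h).symm⟩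

/-- Pathwidth bound from a uniform bound on matchings of layout-crossing edges. -/
theorem pathwidth_le_of_cut (G0 : SimpleGraph V) (key : V → ℕ)
    (hinj : Function.Injective key) (K : ℕ)
    (hcross : ∀ (j : ℕ) (M : Finset (Sym2 V)),
      (∀ e ∈ M, e ∈ G0.edgeSet ∧ eLo key e ≤ j ∧ j < eHi key e) → IsMatching M →
        M.card ≤ K) :
    pathwidth G0 ≤ 2 * K + 1 := by
  set E : Finset (Sym2 V) := Finset.univ.filter (fun e => e ∈ G0.edgeSet) with hE
  have hKb : ∀ j, (Mchain E key j).card ≤ K := by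
    intro j
    refine hcross j _ (fun e he => ?_) (mchain_matching E key j)
    have h2 := mchain_sub E key j he
    rw [crossing, Finset.mem_filter] at h2
    obtain ⟨h3, h4, h5⟩ := h2
    rw [hE, Finset.mem_filter] at h3
    exact ⟨h3.2, h4, h5⟩
  set LEN := 2 * Finset.univ.sup key + 1 with hLEN
  refine Nat.sInf_le ⟨⟨LEN, fun i => Finset.univ.filter
      (fun v => loSlot E key v ≤ (i : ℕ) ∧ (i : ℕ) ≤ hiSlot E key v), ?_, ?_, ?_⟩, ?_⟩
  · intro v
    have hkv : 2 * key v < LEN := by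
      have := Finset.le_sup (f := key) (Finset.mem_univ v)
      omega
    refine ⟨⟨2 * key v, hkv⟩, Finset.mem_filter.mpr ⟨Finset.mem_univ v, ?_⟩⟩
    show loSlot E key v ≤ 2 * key v ∧ 2 * key v ≤ hiSlot E key v
    exact present_pos v (by omega) le_rfl
  · intro u w huw
    have heE : s(u, w) ∈ E := by
      rw [hE, Finset.mem_filter]
      exact ⟨Finset.mem_univ _, (SimpleGraph.mem_edgeSet G0).mpr huw⟩
    have hnd : ¬ (s(u, w) : Sym2 V).IsDiag := by
      simpa using huw.ne
    obtain ⟨t, hts, hcov⟩ := cover_edge_slot hinj heE hnd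
    have htL : t < LEN := by omega
    refine ⟨⟨t, htL⟩, Finset.mem_filter.mpr ⟨Finset.mem_univ _, ?_⟩,
      Finset.mem_filter.mpr ⟨Finset.mem_univ _, ?_⟩⟩
    · show loSlot E key u ≤ t ∧ t ≤ hiSlot E key u
      exact hcov u (Sym2.mem_mk_left u w)
    · show loSlot E key w ≤ t ∧ t ≤ hiSlot E key w
      exact hcov w (Sym2.mem_mk_right u w)
  · intro v i j k2 hij hjk hi hk
    rw [Finset.mem_filter] at hi hk ⊢
    have hij' : (i : ℕ) ≤ (j : ℕ) := hij
    have hjk' : (j : ℕ) ≤ (k2 : ℕ) := hjk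
    exact ⟨Finset.mem_univ v, le_trans hi.2.1 hij', le_trans hjk' hk.2.2⟩
  · intro i
    exact le_trans (bag_card_le hinj hKb _) (by omega)

end CutMachine4
section Glue

attribute [local instance] Classical.propDecidable

variable {V : Type} [Fintype V] [DecidableEq V]

theorem inl_mem_clauseVars {w : V} {e : Sym2 V} (h : w ∈ e) :
    (Sum.inl w : PsiVar V) ∈ clauseVars e := Or.inl ⟨w, h, rfl⟩

theorem key_arith {A B a b N : ℕ} (ha : a < N + 1) (hb : b < N + 1)
    (h : a + A * (N + 1) = b + B * (N + 1)) : A = B ∧ a = b := by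
  have h1 : a = b := by
    have ha' : (a + A * (N + 1)) % (N + 1) = a := by
      rw [Nat.add_mul_mod_self_right]
      exact Nat.mod_eq_of_lt ha
    have hb' : (b + B * (N + 1)) % (N + 1) = b := by
      rw [Nat.add_mul_mod_self_right]
      exact Nat.mod_eq_of_lt hb
    rw [← ha', ← hb', h]
  refine ⟨?_, h1⟩
  have h2 : A * (N + 1) = B * (N + 1) := by omega
  exact Nat.eq_of_mul_eq_mul_right (Nat.succ_pos N) h2

end Glue
/-- if every `x–y` path of `Z` is read-once and
`r = pw(G(x,y))`, then every `x–y` path `P` has a vertex `a` such that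
`𝐒((x,a,y))` fixes a matching of clauses of `ψ(G)` of size at least `⌊r/4⌋`. -/
theorem exists_midpoint_fixing_large_matching {V : Type} [Fintype V] [DecidableEq V]
    (G : SimpleGraph V) (hno : ∀ v : V, ∃ u, G.Adj v u)
    (Z : BP (PsiVar V)) (hZ : Z.IsNBP) (hmono : Z.MonotoneBP)
    (hrep : RepresentsPsi G Z)
    (x y : Fin Z.n) (hxy : Z.Reach x y)
    (hro : ∀ p, Z.IsPathFrom x y p → Z.ReadOnce p)
    (P : List (Fin Z.m)) (hP : Z.IsPathFrom x y P) :
    ∃ a : Fin Z.n, Z.OnPath a x y P ∧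
      ∃ (q : ℕ) (E : Fin q → Sym2 V),
        pathwidth (clauseGraph G Z x y) / 4 ≤ q ∧
        (∀ i, E i ∈ G.edgeSet) ∧
        (∀ i j : Fin q, i ≠ j → ∀ w : V, w ∈ E i → w ∉ E j) ∧
        ∀ i : Fin q, ∃ T : Set (PsiVar V), T ⊂ clauseVars (E i) ∧
          ∀ σ ∈ carriedThrough G Z x a y, ∃ w ∈ T, σ w = true := by
  classical
  set CG := clauseGraph G Z x y with hCG
  set n := pathwidth CG / 4 with hn
  rcases Nat.eq_zero_or_pos n with hn0 | hn1
  · exact ⟨x, ⟨[], P, (List.nil_append P).symm, rfl, hP⟩, 0, fun i => i.elim0,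
      hn0.le, fun i => i.elim0, fun i => i.elim0, fun i => i.elim0⟩
  · have hacy : Z.Acyclic := hZ.1
    have hmain : ∃ i, i ≤ P.length ∧ ∃ F : Finset (Sym2 V),
        (∀ C ∈ F, C ∈ CG.edgeSet ∧ Fx G Z x y P C i) ∧ IsMatching F ∧ n ≤ F.card := by
      by_contra hcon
      push_neg at hcon
      -- layout key: sorted by activity start, tie-broken by an enumeration
      set N := Fintype.card V with hN
      set eF := Fintype.equivFin V with heF
      set hfun : V → ℕ := fun w =>
        (Finset.univ.filter (fun C : Sym2 V => C ∈ CG.edgeSet ∧ w ∈ C)).sup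
          (Jl Z x y P) with hhfun
      set key : V → ℕ := fun w => (eF w : ℕ) + hfun w * (N + 1) with hkey
      have hEFlt : ∀ w : V, (eF w : ℕ) < N + 1 := fun w => (eF w).2.trans (Nat.lt_succ_self N)
      have hinj : Function.Injective key := by
        intro w1 w2 h
        have h' : (eF w1 : ℕ) + hfun w1 * (N + 1) = (eF w2 : ℕ) + hfun w2 * (N + 1) := h
        obtain ⟨-, h2⟩ := key_arith (hEFlt w1) (hEFlt w2) h'
        exact eF.injective (Fin.val_injective h2)
      have hdiv : ∀ w : V, key w / (N + 1) = hfun w := by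
        intro w
        show ((eF w : ℕ) + hfun w * (N + 1)) / (N + 1) = hfun w
        rw [Nat.add_mul_div_right _ _ (Nat.succ_pos N), Nat.div_eq_of_lt (hEFlt w)]
        omega
      have hfun_ge : ∀ (w : V) (C : Sym2 V), C ∈ CG.edgeSet → w ∈ C →
          Jl Z x y P C ≤ hfun w := by
        intro w C hC hw
        exact Finset.le_sup (Finset.mem_filter.mpr ⟨Finset.mem_univ _, hC, hw⟩)
      have hfun_le : ∀ (w : V) (C : Sym2 V), C ∈ CG.edgeSet → w ∈ C →
          hfun w ≤ Jh Z x y P C := by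
        intro w C hC hw
        refine Finset.sup_le (fun D hD => ?_)
        rw [Finset.mem_filter] at hD
        exact jl_le_jh_shared hP hro hacy (inl_mem_clauseVars hw) (inl_mem_clauseVars hD.2.2)
      have hcross : ∀ (j : ℕ) (M : Finset (Sym2 V)),
          (∀ e ∈ M, e ∈ CG.edgeSet ∧ eLo key e ≤ j ∧ j < eHi key e) → IsMatching M →
            M.card ≤ 2 * (n - 1) + 1 := by
        intro j M hM hMm
        set τ := j / (N + 1) with hτ
        have hcls : ∀ e ∈ M, (Fx G Z x y P e τ ∧ τ ≤ P.length) ∨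
            (Fx G Z x y P e (τ - 1) ∧ τ - 1 ≤ P.length ∧ 1 ≤ τ) ∨
            (∃ w ∈ clauseVars e, ∃ hlt : τ - 1 < P.length,
              Z.label (P.get ⟨τ - 1, hlt⟩) = some (w, true)) := by
          intro e he
          obtain ⟨heE, helo, hehi⟩ := hM e he
          obtain ⟨w1, hw1, hk1⟩ := exists_eLo_mem key e
          obtain ⟨w2, hw2, hk2⟩ := exists_eHi_mem key e
          have hJlτ : Jl Z x y P e ≤ τ := by
            have h2 : hfun w1 ≤ τ := by
              rw [← hdiv w1, hτ]
              exact Nat.div_le_div_right (by omega)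
            exact le_trans (hfun_ge w1 e heE hw1) h2
          have hτJh : τ ≤ Jh Z x y P e := by
            have h2 : τ ≤ hfun w2 := by
              rw [← hdiv w2, hτ]
              exact Nat.div_le_div_right (by omega)
            exact le_trans h2 (hfun_le w2 e heE hw2)
          induction e using Sym2.ind with
          | _ u v =>
            have hAdj : CG.Adj u v := (SimpleGraph.mem_edgeSet CG).mp heE
            have hJh_le : Jh Z x y P s(u, v) ≤ P.length + 1 := jh_le_succ
            rcases Nat.lt_or_ge τ (Jh Z x y P s(u, v)) with hlt | hge
            · left
              have hτk : τ ≤ P.length := by omega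
              exact ⟨fx_window hP hro hacy hAdj hJlτ hlt hτk, hτk⟩
            · have hτeq : τ = Jh Z x y P s(u, v) := le_antisymm hτJh hge
              rcases Nat.lt_or_ge (Jl Z x y P s(u, v)) (Jh Z x y P s(u, v)) with hll | hgg
              · right; left
                have h1τ : 1 ≤ τ := by
                  have := jh_pos (Z := Z) (x := x) (y := y) (P := P) hacy (C := s(u, v))
                  omega
                exact ⟨fx_window hP hro hacy hAdj (by omega) (by omega) (by omega),
                  by omega, h1τ⟩
              · have heq : Jl Z x y P s(u, v) = Jh Z x y P s(u, v) :=
                  le_antisymm (jl_le_jh_shared hP hro hacy (inr_mem_clauseVars s(u, v))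
                    (inr_mem_clauseVars s(u, v))) hgg
                obtain ⟨w, hw, hlt, hlab⟩ := star_of_eq hP hro hacy hAdj heq
                right; right
                have hlt' : τ - 1 < P.length := by omega
                have hgeteq : P.get ⟨τ - 1, hlt'⟩ = P.get ⟨Jh Z x y P s(u, v) - 1, hlt⟩ :=
                  congrArg P.get (Fin.ext (show τ - 1 = Jh Z x y P s(u, v) - 1 by omega))
                exact ⟨w, hw, hlt', by rw [hgeteq]; exact hlab⟩
        set M1 := M.filter (fun e => Fx G Z x y P e τ ∧ τ ≤ P.length) with hM1
        set M2 := M.filter (fun e => Fx G Z x y P e (τ - 1) ∧ τ - 1 ≤ P.length ∧ 1 ≤ τ)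
          with hM2
        set M3 := M.filter (fun e => ∃ w ∈ clauseVars e, ∃ hlt : τ - 1 < P.length,
            Z.label (P.get ⟨τ - 1, hlt⟩) = some (w, true)) with hM3
        have hsub : M ⊆ M1 ∪ M2 ∪ M3 := by
          intro e he
          rcases hcls e he with h | h | h
          · exact Finset.mem_union_left _
              (Finset.mem_union_left _ (Finset.mem_filter.mpr ⟨he, h⟩))
          · exact Finset.mem_union_left _
              (Finset.mem_union_right _ (Finset.mem_filter.mpr ⟨he, h⟩))
          · exact Finset.mem_union_right _ (Finset.mem_filter.mpr ⟨he, h⟩)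
        have hc1 : M1.card ≤ n - 1 := by
          rcases M1.eq_empty_or_nonempty with h | ⟨e0, he0⟩
          · rw [h, Finset.card_empty]
            omega
          · have hτk : τ ≤ P.length := (Finset.mem_filter.mp he0).2.2
            have := hcon τ hτk M1
              (fun C hC => ⟨(hM C (Finset.mem_filter.mp hC).1).1,
                (Finset.mem_filter.mp hC).2.1⟩)
              (isMatching_subset (Finset.filter_subset _ _) hMm)
            omega
        have hc2 : M2.card ≤ n - 1 := by
          rcases M2.eq_empty_or_nonempty with h | ⟨e0, he0⟩
          · rw [h, Finset.card_empty]
            omega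
          · have hτk : τ - 1 ≤ P.length := (Finset.mem_filter.mp he0).2.2.1
            have := hcon (τ - 1) hτk M2
              (fun C hC => ⟨(hM C (Finset.mem_filter.mp hC).1).1,
                (Finset.mem_filter.mp hC).2.1⟩)
              (isMatching_subset (Finset.filter_subset _ _) hMm)
            omega
        have hc3 : M3.card ≤ 1 := by
          refine Finset.card_le_one.mpr (fun e1 h1 e2 h2 => ?_)
          rw [hM3, Finset.mem_filter] at h1 h2
          obtain ⟨he1M, w1, hw1, hlt1, hlab1⟩ := h1
          obtain ⟨he2M, w2, hw2, hlt2, hlab2⟩ := h2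
          have hw12 : w1 = w2 := by
            have h12 := hlab1.symm.trans hlab2
            simpa using h12
          subst hw12
          simp only [clauseVars, Set.mem_setOf_eq] at hw1 hw2
          rcases hw1 with ⟨z1, hz1, hw1eq⟩ | hw1eq
          · rcases hw2 with ⟨z2, hz2, hw2eq⟩ | hw2eq
            · have hzz : z1 = z2 := by
                rw [hw1eq] at hw2eq
                exact Sum.inl.inj hw2eq
              subst hzz
              by_contra hne
              exact hMm e1 he1M e2 he2M hne z1 hz1 hz2
            · rw [hw1eq] at hw2eq
              exact absurd hw2eq (by simp)
          · rcases hw2 with ⟨z2, hz2, hw2eq⟩ | hw2eq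
            · rw [hw1eq] at hw2eq
              exact absurd hw2eq (by simp)
            · rw [hw1eq] at hw2eq
              exact Sum.inr.inj hw2eq
        calc M.card ≤ (M1 ∪ M2 ∪ M3).card := Finset.card_le_card hsub
          _ ≤ (M1 ∪ M2).card + M3.card := Finset.card_union_le _ _
          _ ≤ M1.card + M2.card + M3.card := by
              have := Finset.card_union_le M1 M2
              omega
          _ ≤ 2 * (n - 1) + 1 := by omega
      have hpw := pathwidth_le_of_cut CG key hinj _ hcross
      have h4 : n * 4 ≤ pathwidth CG := by
        rw [hn]
        exact Nat.div_mul_le_self (pathwidth CG) 4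
      omega
    obtain ⟨i, hik, F, hFprop, hFmatch, hFcard⟩ := hmain
    obtain ⟨F', hF'sub, hF'card⟩ := Finset.exists_subset_card_eq hFcard
    set Efun : Fin n → Sym2 V :=
      fun q => (F'.equivFin.symm (Fin.cast hF'card.symm q) : Sym2 V) with hEfun
    have hEmem : ∀ q : Fin n, Efun q ∈ F := by
      intro q
      exact hF'sub (F'.equivFin.symm (Fin.cast hF'card.symm q)).2
    have hEinj : ∀ q1 q2 : Fin n, q1 ≠ q2 → Efun q1 ≠ Efun q2 := by
      intro q1 q2 hne heq
      apply hne
      have h1 := F'.equivFin.symm.injective (Subtype.ext heq)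
      have h2 : (Fin.cast hF'card.symm q1 : ℕ) = (Fin.cast hF'card.symm q2 : ℕ) := by
        rw [h1]
      exact Fin.val_injective h2
    have hle : CG ≤ G := by
      intro u v h
      exact h.1
    refine ⟨avtx Z x P i,
      ⟨P.take i, P.drop i, (List.take_append_drop i P).symm, avtx_take hP i, avtx_drop hP i⟩,
      n, Efun, le_rfl, ?_, ?_, ?_⟩
    · intro q
      exact SimpleGraph.edgeSet_mono hle (hFprop _ (hEmem q)).1
    · intro q1 q2 hne w hw1
      exact hFmatch _ (hEmem q1) _ (hEmem q2) (hEinj q1 q2 hne) w hw1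
    · intro q
      exact (hFprop _ (hEmem q)).2
end

section
/- Let H be a finite simple graph and let π be a linear ordering (permutation) of V(H). Then there is a prefix π' of π such that H contains a matching of size at least pw(H)/2 every edge of which has one endpoint among the vertices of π' and the other endpoint among the vertices of π not in π', where pw(H) is the pathwidth of H. -/
set_option linter.unusedSectionVars false
set_option linter.unusedVariables false

namespace PW19
open Finset

variable {V : Type} [Fintype V] [DecidableEq V]

def pos (π : Fin (Fintype.card V) ≃ V) (v : V) : ℕ := (π.symm v : ℕ)

lemma pos_lt (π : Fin (Fintype.card V) ≃ V) (v : V) : pos π v < Fintype.card V :=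
  (π.symm v).isLt

lemma pos_inj (π : Fin (Fintype.card V) ≃ V) {u v : V} (h : pos π u = pos π v) : u = v := by
  have : π.symm u = π.symm v := Fin.ext h
  exact π.symm.injective this

lemma eq_vtx_of_pos (π : Fin (Fintype.card V) ≃ V) {v : V} {t : ℕ} (ht : t < Fintype.card V)
    (h : pos π v = t) : v = π ⟨t, ht⟩ := by
  have : π.symm v = ⟨t, ht⟩ := Fin.ext h
  rw [← this, Equiv.apply_symm_apply]

lemma pos_vtx (π : Fin (Fintype.card V) ≃ V) {t : ℕ} (ht : t < Fintype.card V) :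
    pos π (π ⟨t, ht⟩) = t := by simp [pos]

def IsMatch (M : Finset (V × V)) : Prop :=
  ∀ e ∈ M, ∀ e' ∈ M, e ≠ e' → e.1 ≠ e'.1 ∧ e.1 ≠ e'.2 ∧ e.2 ≠ e'.1 ∧ e.2 ≠ e'.2

def Good (H : SimpleGraph V) (π : Fin (Fintype.card V) ≃ V) (t : ℕ) (M : Finset (V × V)) :
    Prop :=
  IsMatch M ∧ ∀ e ∈ M, H.Adj e.1 e.2 ∧ pos π e.1 < t ∧ t ≤ pos π e.2

def inM (M : Finset (V × V)) (v : V) : Prop := ∃ e ∈ M, v = e.1 ∨ v = e.2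

lemma inM_mono {M N : Finset (V × V)} (h : M ⊆ N) {v : V} (hv : inM M v) : inM N v := by
  obtain ⟨e, he, hv⟩ := hv; exact ⟨e, h he, hv⟩

lemma isMatch_subset {M N : Finset (V × V)} (h : M ⊆ N) (hN : IsMatch N) : IsMatch M :=
  fun e he e' he' hne => hN e (h he) e' (h he') hne

lemma isMatch_insert {N : Finset (V × V)} (hN : IsMatch N) {a b : V}
    (ha : ¬ inM N a) (hb : ¬ inM N b) (hab : a ≠ b) : IsMatch (insert (a, b) N) := by
  intro e he e' he' hne
  rcases Finset.mem_insert.mp he with rfl | he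
  · rcases Finset.mem_insert.mp he' with rfl | he'
    · exact absurd rfl hne
    · refine ⟨?_, ?_, ?_, ?_⟩ <;> simp only []
      · exact fun h => ha ⟨e', he', Or.inl h⟩
      · exact fun h => ha ⟨e', he', Or.inr h⟩
      · exact fun h => hb ⟨e', he', Or.inl h⟩
      · exact fun h => hb ⟨e', he', Or.inr h⟩
  · rcases Finset.mem_insert.mp he' with rfl | he'
    · refine ⟨?_, ?_, ?_, ?_⟩ <;> simp only []
      · exact fun h => ha ⟨e, he, Or.inl h.symm⟩
      · exact fun h => hb ⟨e, he, Or.inl h.symm⟩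
      · exact fun h => ha ⟨e, he, Or.inr h.symm⟩
      · exact fun h => hb ⟨e, he, Or.inr h.symm⟩
    · exact hN e he e' he' hne

/-- One augmentation step: try to match `x` (a prefix vertex) to an unmatched
crossing neighbour. -/
lemma aug (H : SimpleGraph V) (π : Fin (Fintype.card V) ≃ V) (t : ℕ)
    (N : Finset (V × V)) (hN : Good H π (t+1) N) (x : V) (hx : pos π x ≤ t)
    (hxN : ¬ inM N x) :
    ∃ N', N ⊆ N' ∧ Good H π (t+1) N' ∧
      (∀ e ∈ N', e ∉ N → e.1 = x) ∧
      (¬ inM N' x → ∀ w, H.Adj x w → t+1 ≤ pos π w → inM N w) := by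
  classical
  by_cases h : ∃ w, H.Adj x w ∧ t+1 ≤ pos π w ∧ ¬ inM N w
  · obtain ⟨w, hadj, hw, hwN⟩ := h
    have hxw : x ≠ w := by
      intro hh
      rw [hh] at hx
      omega
    refine ⟨insert (x, w) N, Finset.subset_insert _ _, ⟨isMatch_insert hN.1 hxN hwN hxw, ?_⟩,
      ?_, ?_⟩
    · intro e he
      rcases Finset.mem_insert.mp he with rfl | he
      · exact ⟨hadj, show pos π x < t + 1 by omega, hw⟩
      · exact hN.2 e he
    · intro e he hne
      rcases Finset.mem_insert.mp he with rfl | he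
      · rfl
      · exact absurd he hne
    · intro hc
      exact absurd ⟨(x, w), Finset.mem_insert_self _ _, Or.inl rfl⟩ hc
  · refine ⟨N, Finset.Subset.refl _, hN, fun e he hne => absurd he hne, fun _ w hadj hw => ?_⟩
    push_neg at h
    exact h w hadj hw


def Step (H : SimpleGraph V) (π : Fin (Fintype.card V) ≃ V) (t : ℕ) (z : V)
    (M M' : Finset (V × V)) : Prop :=
  Good H π (t+1) M' ∧
  (∀ e ∈ M, t+1 ≤ pos π e.2 → e ∈ M') ∧
  (∀ e ∈ M', e ∉ M → e.1 = z ∨ (e.1, z) ∈ M) ∧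
  (∀ u, (u, z) ∈ M → ¬ inM M' u → ∀ w, H.Adj u w → t+1 ≤ pos π w → inM M w) ∧
  (∀ w, H.Adj z w → t+1 ≤ pos π w → inM M' z ∨ inM M' w)

lemma step_exists (H : SimpleGraph V) (π : Fin (Fintype.card V) ≃ V) (t : ℕ) (z : V)
    (hz : pos π z = t) (M : Finset (V × V)) (hM : Good H π t M) :
    ∃ M', Step H π t z M M' := by
  classical
  set N : Finset (V × V) := M.filter (fun e => t+1 ≤ pos π e.2) with hNdef
  have hNsub : N ⊆ M := Finset.filter_subset _ _
  have hNmem : ∀ e, e ∈ N ↔ e ∈ M ∧ t+1 ≤ pos π e.2 := fun e => Finset.mem_filter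
  have hNgood : Good H π (t+1) N := by
    refine ⟨isMatch_subset hNsub hM.1, fun e he => ?_⟩
    obtain ⟨heM, he2⟩ := (hNmem e).mp he
    obtain ⟨hadj, h1, _⟩ := hM.2 e heM
    exact ⟨hadj, by omega, he2⟩
  -- stage 1: possibly rematch the vertex that lost its partner z
  have stage1 : ∃ N₁, N ⊆ N₁ ∧ Good H π (t+1) N₁ ∧
      (∀ e ∈ N₁, e ∉ N → (e.1, z) ∈ M) ∧
      (∀ u, (u, z) ∈ M → ¬ inM N₁ u → ∀ w, H.Adj u w → t+1 ≤ pos π w → inM N w) := by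
    by_cases hdead : ∃ u, (u, z) ∈ M
    · obtain ⟨u₀, hu₀⟩ := hdead
      have hu₀pos : pos π u₀ < t := (hM.2 _ hu₀).2.1
      have hu₀N : ¬ inM N u₀ := by
        rintro ⟨e, he, hve⟩
        have heM := hNsub he
        have he2 := ((hNmem e).mp he).2
        have hne : (u₀, z) ≠ e := by
          rintro rfl
          simp only at he2
          omega
        have hd := hM.1 _ hu₀ _ heM hne
        rcases hve with h | h
        · exact hd.1 h
        · exact hd.2.1 h
      obtain ⟨N₁, hsub, hgood, hnew, hfail⟩ :=
        aug H π t N hNgood u₀ (by omega) hu₀N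
      refine ⟨N₁, hsub, hgood, fun e he hne => ?_, fun u hu hui w hadj hw => ?_⟩
      · rw [hnew e he hne]; exact hu₀
      · have : u = u₀ := by
          by_contra hne'
          have hpne : (u, z) ≠ (u₀, z) := fun h => hne' (congrArg Prod.fst h)
          exact (hM.1 _ hu _ hu₀ hpne).2.2.2 rfl
        subst this
        exact hfail hui w hadj hw
    · refine ⟨N, Finset.Subset.refl _, hNgood, fun e he hne => absurd he hne,
        fun u hu => absurd ⟨u, hu⟩ hdead⟩
  obtain ⟨N₁, hsub1, hgood1, hnew1, hS4⟩ := stage1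
  -- z is unmatched in N₁
  have hzN₁ : ¬ inM N₁ z := by
    rintro ⟨e, he, hve⟩
    by_cases heN : e ∈ N
    · have he2 := ((hNmem e).mp heN).2
      have he1 := (hM.2 e (hNsub heN)).2.1
      rcases hve with h | h
      · rw [← h] at he1; omega
      · rw [← h] at he2; omega
    · have hez := hnew1 e he heN
      have he1 := (hM.2 _ hez).2.1
      have he2 := (hgood1.2 e he).2.2
      rcases hve with h | h
      · rw [← h] at he1; omega
      · rw [← h] at he2; omega
  obtain ⟨M', hsub2, hgood2, hnew2, hfail2⟩ :=
    aug H π t N₁ hgood1 z (by omega) hzN₁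
  refine ⟨M', hgood2, ?_, ?_, ?_, ?_⟩
  · intro e he h2
    exact hsub2 (hsub1 ((hNmem e).mpr ⟨he, h2⟩))
  · intro e he heM
    by_cases h1 : e ∈ N₁
    · by_cases h0 : e ∈ N
      · exact absurd (hNsub h0) heM
      · exact Or.inr (hnew1 e h1 h0)
    · exact Or.inl (hnew2 e he h1)
  · intro u hu hui w hadj hw
    have : ¬ inM N₁ u := fun h => hui (inM_mono hsub2 h)
    exact inM_mono hNsub (hS4 u hu this w hadj hw)
  · intro w hadj hw
    by_cases hzM : inM M' z
    · exact Or.inl hzM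
    · exact Or.inr (inM_mono hsub2 (hfail2 hzM w hadj hw))


variable (H : SimpleGraph V) (π : Fin (Fintype.card V) ≃ V)

noncomputable def Mseq : ℕ → Finset (V × V)
  | 0 => ∅
  | (t+1) =>
    @dite _ (t < Fintype.card V ∧ Good H π t (Mseq t)) (Classical.propDecidable _)
      (fun h =>
        Classical.choose (step_exists H π t (π ⟨t, h.1⟩) (pos_vtx π h.1) (Mseq t) h.2))
      (fun _ => ∅)

lemma good_Mseq : ∀ t, Good H π t (Mseq H π t)
  | 0 => ⟨fun e he => absurd he (Finset.notMem_empty e),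
      fun e he => absurd he (Finset.notMem_empty e)⟩
  | (t+1) => by
    by_cases h : t < Fintype.card V
    · have hg := good_Mseq t
      rw [Mseq, dif_pos ⟨h, hg⟩]
      exact (Classical.choose_spec
        (step_exists H π t (π ⟨t, h⟩) (pos_vtx π h) (Mseq H π t) hg)).1
    · rw [Mseq, dif_neg (fun hc => h hc.1)]
      exact ⟨fun e he => absurd he (Finset.notMem_empty e),
        fun e he => absurd he (Finset.notMem_empty e)⟩

lemma step_Mseq (t : ℕ) (ht : t < Fintype.card V) :
    Step H π t (π ⟨t, ht⟩) (Mseq H π t) (Mseq H π (t+1)) := by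
  have hg := good_Mseq H π t
  rw [Mseq, dif_pos ⟨ht, hg⟩]
  exact Classical.choose_spec
    (step_exists H π t (π ⟨t, ht⟩) (pos_vtx π ht) (Mseq H π t) hg)

lemma right_persist {v : V} {t : ℕ} (ht : t < Fintype.card V)
    (h : inM (Mseq H π t) v) (hp : t + 1 ≤ pos π v) : inM (Mseq H π (t+1)) v := by
  obtain ⟨e, he, hv⟩ := h
  have hc := (good_Mseq H π t).2 e he
  have hv2 : v = e.2 := by
    rcases hv with h | h
    · rw [← h] at hc; omega
    · exact h
  have := (step_Mseq H π t ht).2.1 e he (by rw [← hv2]; omega)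
  exact ⟨e, this, Or.inr hv2⟩

lemma left_persist {v : V} {t : ℕ} (ht : t < Fintype.card V)
    (h : inM (Mseq H π (t+1)) v) (hp : pos π v < t) : inM (Mseq H π t) v := by
  obtain ⟨e, he, hv⟩ := h
  have hc := (good_Mseq H π (t+1)).2 e he
  have hv1 : v = e.1 := by
    rcases hv with h | h
    · exact h
    · rw [← h] at hc; omega
  by_cases heM : e ∈ Mseq H π t
  · exact ⟨e, heM, Or.inl hv1⟩
  · rcases (step_Mseq H π t ht).2.2.1 e he heM with h1 | h1
    · exfalso
      rw [← hv1] at h1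
      have := pos_vtx π ht
      rw [h1] at hp
      omega
    · rw [← hv1] at h1
      exact ⟨(v, π ⟨t, ht⟩), h1, Or.inl rfl⟩

lemma mono_up {v : V} {a b : ℕ} (hab : a ≤ b) (hb : b ≤ pos π v)
    (h : inM (Mseq H π a) v) : inM (Mseq H π b) v := by
  induction b, hab using Nat.le_induction with
  | base => exact h
  | succ b hab ih =>
    have hb' : b + 1 ≤ pos π v := hb
    have hbn : b < Fintype.card V := lt_of_lt_of_le (by omega) (Nat.le_of_lt (pos_lt π v))
    exact right_persist H π hbn (ih (by omega)) hb'

lemma mono_down {v : V} {a b : ℕ} (hab : a ≤ b) (ha : pos π v < a)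
    (hb : b ≤ Fintype.card V) (h : inM (Mseq H π b) v) : inM (Mseq H π a) v := by
  induction b, hab using Nat.le_induction with
  | base => exact h
  | succ b hab ih =>
    have hbn : b < Fintype.card V := by omega
    exact ih (by omega) (left_persist H π hbn h (by omega))


noncomputable def bagF (i : Fin (Fintype.card V)) : Finset V :=
  insert (π i) ((Mseq H π ((i : ℕ) + 1)).image Prod.fst ∪
    (Mseq H π ((i : ℕ) + 1)).image Prod.snd)

lemma mem_bagF {v : V} {i : Fin (Fintype.card V)} :
    v ∈ bagF H π i ↔ v = π i ∨ inM (Mseq H π ((i : ℕ) + 1)) v := by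
  simp only [bagF, Finset.mem_insert, Finset.mem_union, Finset.mem_image, inM]
  constructor
  · rintro (h | ⟨e, he, h⟩ | ⟨e, he, h⟩)
    · exact Or.inl h
    · exact Or.inr ⟨e, he, Or.inl h.symm⟩
    · exact Or.inr ⟨e, he, Or.inr h.symm⟩
  · rintro (h | ⟨e, he, h | h⟩)
    · exact Or.inl h
    · exact Or.inr (Or.inl ⟨e, he, h.symm⟩)
    · exact Or.inr (Or.inr ⟨e, he, h.symm⟩)

lemma pos_pi (i : Fin (Fintype.card V)) : pos π (π i) = (i : ℕ) := by simp [pos]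

lemma coverage {u w : V} (hadj : H.Adj u w) (hlt : pos π u < pos π w) :
    ∃ i : Fin (Fintype.card V), u ∈ bagF H π i ∧ w ∈ bagF H π i := by
  classical
  have hkn : pos π w < Fintype.card V := pos_lt π w
  have hjn : pos π u < Fintype.card V := by omega
  set j := pos π u with hjdef
  set k := pos π w with hkdef
  have hu : u = π ⟨j, hjn⟩ := eq_vtx_of_pos π hjn rfl
  have hw : w = π ⟨k, hkn⟩ := eq_vtx_of_pos π hkn rfl
  by_cases h1 : inM (Mseq H π (j+1)) w
  · exact ⟨⟨j, hjn⟩, (mem_bagF H π).mpr (Or.inl hu),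
      (mem_bagF H π).mpr (Or.inr h1)⟩
  · have hS5 := (step_Mseq H π j hjn).2.2.2.2 w (by rw [← hu]; exact hadj) (by omega)
    have hu1 : inM (Mseq H π (j+1)) u := by
      rcases hS5 with h | h
      · rw [← hu] at h; exact h
      · exact absurd h h1
    by_cases hall : ∀ s, j+1 ≤ s → s ≤ k → inM (Mseq H π s) u
    · have hk := hall k (by omega) le_rfl
      by_cases hwk : inM (Mseq H π k) w
      · have hk1 : k - 1 < Fintype.card V := by omega
        have hkk : k - 1 + 1 = k := by omega
        refine ⟨⟨k-1, hk1⟩, ?_, ?_⟩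
        · exact (mem_bagF H π).mpr (Or.inr (by rw [hkk]; exact hk))
        · exact (mem_bagF H π).mpr (Or.inr (by rw [hkk]; exact hwk))
      · obtain ⟨e, he, hv⟩ := hk
        have hc := (good_Mseq H π k).2 e he
        have hv1 : u = e.1 := by
          rcases hv with h | h
          · exact h
          · rw [← h] at hc; omega
        have he2k : pos π e.2 ≠ k := by
          intro hh
          have : e.2 = w := pos_inj π (by rw [hh, hkdef])
          exact hwk ⟨e, he, Or.inr this.symm⟩
        have hcross : k + 1 ≤ pos π e.2 := by omega
        have hnext := (step_Mseq H π k hkn).2.1 e he hcross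
        refine ⟨⟨k, hkn⟩, ?_, ?_⟩
        · exact (mem_bagF H π).mpr (Or.inr ⟨e, hnext, Or.inl hv1⟩)
        · exact (mem_bagF H π).mpr (Or.inl hw)
    · push_neg at hall
      have hex : ∃ s, j+1 ≤ s ∧ s ≤ k ∧ ¬ inM (Mseq H π s) u := by
        obtain ⟨s, h1', h2', h3'⟩ := hall
        exact ⟨s, h1', h2', h3'⟩
      set s₀ := Nat.find hex with hs₀def
      have hP := Nat.find_spec hex
      obtain ⟨hs₀1, hs₀2, hs₀3⟩ := hP
      rw [← hs₀def] at hs₀1 hs₀2 hs₀3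
      have hgt : j + 1 < s₀ := by
        rcases Nat.lt_or_ge (j+1) s₀ with h | h
        · exact h
        · exfalso
          have heq' : s₀ = j + 1 := by omega
          rw [heq'] at hs₀3
          exact hs₀3 hu1
      set s := s₀ - 1 with hsdef
      have hss : s + 1 = s₀ := by omega
      have hsn : s < Fintype.card V := by omega
      have hus : inM (Mseq H π s) u := by
        by_contra hc
        have := Nat.find_min hex (m := s) (by omega)
        exact this ⟨by omega, by omega, hc⟩
      obtain ⟨e, he, hv⟩ := hus
      have hc := (good_Mseq H π s).2 e he
      have hv1 : u = e.1 := by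
        rcases hv with h | h
        · exact h
        · rw [← h] at hc; omega
      have hse2 : pos π e.2 = s := by
        by_contra hne
        have hc2 : s + 1 ≤ pos π e.2 := by omega
        have := (step_Mseq H π s hsn).2.1 e he hc2
        rw [hss] at this
        exact hs₀3 ⟨e, this, hv⟩
      have he2 : e.2 = π ⟨s, hsn⟩ := eq_vtx_of_pos π hsn hse2
      have heM : (u, π ⟨s, hsn⟩) ∈ Mseq H π s := by
        have heq' : (u, π ⟨s, hsn⟩) = e := by
          rw [hv1, ← he2]
        rw [heq']; exact he
      have hnu : ¬ inM (Mseq H π (s+1)) u := by rw [hss]; exact hs₀3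
      have hS4 := (step_Mseq H π s hsn).2.2.2.1 u heM hnu w hadj (by omega)
      have hs1 : s - 1 < Fintype.card V := by omega
      have hskk : s - 1 + 1 = s := by omega
      refine ⟨⟨s-1, hs1⟩, ?_, ?_⟩
      · exact (mem_bagF H π).mpr (Or.inr (by rw [hskk]; exact ⟨e, he, hv⟩))
      · exact (mem_bagF H π).mpr (Or.inr (by rw [hskk]; exact hS4))

lemma interval_bagF (v : V) (i j k : Fin (Fintype.card V)) (hij : i ≤ j) (hjk : j ≤ k)
    (hi : v ∈ bagF H π i) (hk : v ∈ bagF H π k) : v ∈ bagF H π j := by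
  have hij' : (i : ℕ) ≤ (j : ℕ) := hij
  have hjk' : (j : ℕ) ≤ (k : ℕ) := hjk
  rcases Nat.lt_trichotomy (j : ℕ) (pos π v) with hlt | heq | hgt
  · have hi' : inM (Mseq H π ((i : ℕ) + 1)) v := by
      rcases (mem_bagF H π).mp hi with h | h
      · exfalso
        have : pos π v = (i : ℕ) := by rw [h, pos_pi]
        omega
      · exact h
    exact (mem_bagF H π).mpr (Or.inr (mono_up H π (by omega) (by omega) hi'))
  · have : v = π j := by
      have := eq_vtx_of_pos π j.isLt heq.symm
      rw [this]
    exact (mem_bagF H π).mpr (Or.inl this)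
  · have hk' : inM (Mseq H π ((k : ℕ) + 1)) v := by
      rcases (mem_bagF H π).mp hk with h | h
      · exfalso
        have : pos π v = (k : ℕ) := by rw [h, pos_pi]
        omega
      · exact h
    exact (mem_bagF H π).mpr
      (Or.inr (mono_down H π (by omega) (by omega) (by omega) hk'))


lemma card_bagF (i : Fin (Fintype.card V)) :
    (bagF H π i).card ≤ 2 * (Mseq H π ((i : ℕ) + 1)).card + 1 := by
  have h1 := Finset.card_insert_le (π i)
    ((Mseq H π ((i : ℕ) + 1)).image Prod.fst ∪ (Mseq H π ((i : ℕ) + 1)).image Prod.snd)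
  have h2 := Finset.card_union_le ((Mseq H π ((i : ℕ) + 1)).image Prod.fst)
    ((Mseq H π ((i : ℕ) + 1)).image Prod.snd)
  have h3 := Finset.card_image_le (s := Mseq H π ((i : ℕ) + 1)) (f := Prod.fst)
  have h4 := Finset.card_image_le (s := Mseq H π ((i : ℕ) + 1)) (f := Prod.snd)
  unfold bagF
  omega

end PW19

open PW19 in
theorem exists_prefix_with_large_crossing_matching' {V : Type} [Fintype V]
    [DecidableEq V] (H : SimpleGraph V) (π : Fin (Fintype.card V) ≃ V) :
    ∃ t : ℕ, t ≤ Fintype.card V ∧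
      ∃ (q : ℕ) (f : Fin q → V × V),
        pathwidth H ≤ 2 * q ∧
        (∀ i, H.Adj (f i).1 (f i).2) ∧
        (∀ i j : Fin q, i ≠ j →
          (f i).1 ≠ (f j).1 ∧ (f i).1 ≠ (f j).2 ∧
          (f i).2 ≠ (f j).1 ∧ (f i).2 ≠ (f j).2) ∧
        (∀ i, ((π.symm (f i).1 : ℕ) < t ∧ t ≤ (π.symm (f i).2 : ℕ))) := by
  classical
  obtain ⟨ts, htsmem, htsmax⟩ := Finset.exists_max_image
    (Finset.range (Fintype.card V + 1)) (fun t => (Mseq H π t).card)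
    ⟨0, Finset.mem_range.mpr (by omega)⟩
  have htsle : ts ≤ Fintype.card V := by
    have := Finset.mem_range.mp htsmem
    omega
  set q := (Mseq H π ts).card with hq
  refine ⟨ts, htsle, q, fun i => ((Mseq H π ts).equivFin.symm i : V × V), ?_, ?_, ?_, ?_⟩
  · -- pathwidth bound
    apply Nat.sInf_le
    refine ⟨⟨Fintype.card V, bagF H π, ?_, ?_, ?_⟩, ?_⟩
    · intro v
      refine ⟨π.symm v, (mem_bagF H π).mpr (Or.inl ?_)⟩
      exact (Equiv.apply_symm_apply π v).symm
    · intro u v hadj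
      have hne : pos π u ≠ pos π v := fun h => hadj.ne (pos_inj π h)
      rcases Nat.lt_or_ge (pos π u) (pos π v) with h | h
      · exact coverage H π hadj h
      · obtain ⟨i, h1, h2⟩ := coverage H π hadj.symm (by omega)
        exact ⟨i, h2, h1⟩
    · exact interval_bagF H π
    · intro i
      have hb := card_bagF H π i
      have hmem : (i : ℕ) + 1 ∈ Finset.range (Fintype.card V + 1) :=
        Finset.mem_range.mpr (by have h5 : (i : ℕ) < Fintype.card V := i.isLt; omega)
      have hle := htsmax _ hmem
      simp only at hle
      show (bagF H π i).card ≤ 2 * q + 1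
      omega
  · intro i
    have hmem := ((Mseq H π ts).equivFin.symm i).2
    exact ((good_Mseq H π ts).2 _ hmem).1
  · intro i j hij
    have hmemi := ((Mseq H π ts).equivFin.symm i).2
    have hmemj := ((Mseq H π ts).equivFin.symm j).2
    have hne : ((Mseq H π ts).equivFin.symm i : V × V) ≠
        ((Mseq H π ts).equivFin.symm j : V × V) := by
      intro h
      exact hij ((Mseq H π ts).equivFin.symm.injective (Subtype.ext h))
    exact (good_Mseq H π ts).1 _ hmemi _ hmemj hne
  · intro i
    have hmem := ((Mseq H π ts).equivFin.symm i).2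
    have := ((good_Mseq H π ts).2 _ hmem).2
    exact this


/-- for every finite simple graph `H` and every linear ordering
`π` of its vertices, some prefix of `π` (the first `t` vertices) is separated
from its complement by a matching of size at least `pw(H)/2`. -/
theorem exists_prefix_with_large_crossing_matching {V : Type} [Fintype V]
    [DecidableEq V] (H : SimpleGraph V) (π : Fin (Fintype.card V) ≃ V) :
    ∃ t : ℕ, t ≤ Fintype.card V ∧
      ∃ (q : ℕ) (f : Fin q → V × V),
        pathwidth H ≤ 2 * q ∧
        (∀ i, H.Adj (f i).1 (f i).2) ∧
        (∀ i j : Fin q, i ≠ j →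
          (f i).1 ≠ (f j).1 ∧ (f i).1 ≠ (f j).2 ∧
          (f i).2 ≠ (f j).1 ∧ (f i).2 ≠ (f j).2) ∧
        (∀ i, ((π.symm (f i).1 : ℕ) < t ∧ t ≤ (π.symm (f i).2 : ℕ))) := by
  exact exists_prefix_with_large_crossing_matching' H π
end
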